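/- arXiv:2311.06013 — 8 statements merged into one kernel-verified Lean document; each statement's English description precedes it below -/
import Mathlib

section
/- Let t ≥ 1 be a real number and let u, v, p be points in the Euclidean plane EuclideanSpace ℝ (Fin 2). If dist p u + dist p v ≤ t · dist u v, then the distance from p to the closed segment joining u and v satisfies Metric.infDist p (segment ℝ u v) ≤ (Real.sqrt (t^2 − 1) / 2) · dist u v. -/
theorem my_aux_obtuse (t a b d : ℝ) (ht : 1 ≤ t) (ha : 0 ≤ a) (hb : 0 ≤ b)
    (hd : 0 < d) (habt : a + b ≤ t * d) (hobt : a ^ 2 + d ^ 2 ≤ b ^ 2) :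
    4 * a ^ 2 ≤ (t ^ 2 - 1) * d ^ 2 := by
  have hbd : b ≤ t * d - a := by linarith
  have h2 : (2 * t * a) * d ≤ ((t ^ 2 - 1) * d) * d := by nlinarith
  have h3 : 2 * t * a ≤ (t ^ 2 - 1) * d := le_of_mul_le_mul_right h2 hd
  have ht2 : (0:ℝ) ≤ t ^ 2 - 1 := by nlinarith
  nlinarith [sq_nonneg t, mul_nonneg (mul_nonneg ht2 hd.le) hd.le]

theorem my_aux_mid (t a b d hh x y : ℝ) (ht : 1 ≤ t) (ha : 0 ≤ a) (hb : 0 ≤ b)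
    (hh0 : 0 ≤ hh) (hx : 0 ≤ x) (hy : 0 ≤ y) (hxy : x + y = d)
    (hax : a ^ 2 = hh ^ 2 + x ^ 2) (hby : b ^ 2 = hh ^ 2 + y ^ 2)
    (habt : a + b ≤ t * d) :
    4 * hh ^ 2 ≤ (t ^ 2 - 1) * d ^ 2 := by
  have hab : hh ^ 2 + x * y ≤ a * b := by
    refine le_of_pow_le_pow_left₀ two_ne_zero (mul_nonneg ha hb) ?_
    have habsq : (a * b) ^ 2 = (hh ^ 2 + x ^ 2) * (hh ^ 2 + y ^ 2) := by
      rw [← hax, ← hby]; ring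
    nlinarith [sq_nonneg (hh * (x - y))]
  have hsum : 4 * hh ^ 2 + d ^ 2 ≤ (a + b) ^ 2 := by nlinarith
  have habn : 0 ≤ a + b := by linarith
  have htd2 : (a + b) ^ 2 ≤ (t * d) ^ 2 := by nlinarith
  nlinarith

/-- Any point `p` of the closed elliptical region with foci `u`, `v` and major axis
`t · dist u v` lies within distance `(√(t² − 1) / 2) · dist u v` of the segment `uv`. -/
theorem ellipse_point_close_to_segment (t : ℝ) (ht : 1 ≤ t)
    (u v p : EuclideanSpace ℝ (Fin 2))
    (h : dist p u + dist p v ≤ t * dist u v) :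
    Metric.infDist p (segment ℝ u v) ≤ Real.sqrt (t ^ 2 - 1) / 2 * dist u v := by
  have ht2 : (0:ℝ) ≤ t ^ 2 - 1 := by nlinarith
  have hs : Real.sqrt (t ^ 2 - 1) ^ 2 = t ^ 2 - 1 := Real.sq_sqrt ht2
  have hsn : 0 ≤ Real.sqrt (t ^ 2 - 1) := Real.sqrt_nonneg _
  set d := dist u v with hd
  set a := dist p u with ha'
  set b := dist p v with hb'
  have hd0 : 0 ≤ d := dist_nonneg
  have ha : 0 ≤ a := dist_nonneg
  have hb : 0 ≤ b := dist_nonneg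
  have final : ∀ q ∈ segment ℝ u v, 4 * dist p q ^ 2 ≤ (t ^ 2 - 1) * d ^ 2 →
      Metric.infDist p (segment ℝ u v) ≤ Real.sqrt (t ^ 2 - 1) / 2 * d := by
    intro q hq hq2
    refine le_trans (Metric.infDist_le_dist_of_mem hq) ?_
    have h1 : dist p q ^ 2 ≤ (Real.sqrt (t ^ 2 - 1) / 2 * d) ^ 2 := by nlinarith
    exact le_of_pow_le_pow_left₀ two_ne_zero (by positivity) h1
  rcases eq_or_lt_of_le hd0 with hd0' | hdpos
  · have hab0 : a + b ≤ 0 := by nlinarith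
    have ha0 : a = 0 := by linarith
    refine final u (left_mem_segment ℝ u v) ?_
    have hpu0 : dist p u = 0 := ha0
    rw [hpu0]
    nlinarith
  · have hw : ‖v - u‖ = d := by rw [hd, dist_eq_norm, norm_sub_rev]
    have hpu : ‖p - u‖ = a := (dist_eq_norm p u).symm
    set μ := (inner ℝ (p - u) (v - u) : ℝ) with hμ
    have hb2 : b ^ 2 = a ^ 2 - 2 * μ + d ^ 2 := by
      have hpv : p - v = (p - u) - (v - u) := by abel
      rw [hb', dist_eq_norm, hpv, norm_sub_sq_real, hpu, hw]
    have habt : a + b ≤ t * d := h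
    rcases le_or_gt μ 0 with hμ0 | hμpos
    · refine final u (left_mem_segment ℝ u v) ?_
      have hbge : a ^ 2 + d ^ 2 ≤ b ^ 2 := by nlinarith
      have : dist p u = a := rfl
      rw [this]
      exact my_aux_obtuse t a b d ht ha hb hdpos habt hbge
    · rcases le_or_gt (d ^ 2) μ with hμ1 | hμ1
      · refine final v (right_mem_segment ℝ u v) ?_
        have hage : b ^ 2 + d ^ 2 ≤ a ^ 2 := by nlinarith
        have : dist p v = b := rfl
        rw [this]
        exact my_aux_obtuse t b a d ht hb ha hdpos (by linarith) hage
      · set lam := μ / d ^ 2 with hlam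
        have hd2 : (0:ℝ) < d ^ 2 := by positivity
        have hmu : μ = lam * d ^ 2 := by rw [hlam]; field_simp
        have hlam0 : 0 ≤ lam := le_of_lt (div_pos hμpos hd2)
        have hlam1 : lam ≤ 1 := by rw [hlam, div_le_one hd2]; linarith
        set q := u + lam • (v - u) with hq
        have hqseg : q ∈ segment ℝ u v := by
          refine ⟨1 - lam, lam, by linarith, hlam0, by ring, ?_⟩
          rw [hq]; module
        have hpq : p - q = (p - u) - lam • (v - u) := by rw [hq]; abel
        have hh2 : dist p q ^ 2 = a ^ 2 - lam ^ 2 * d ^ 2 := by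
          rw [dist_eq_norm, hpq, norm_sub_sq_real, hpu, real_inner_smul_right,
            norm_smul, Real.norm_eq_abs, mul_pow, sq_abs, hw, ← hμ]
          linear_combination (-2 : ℝ) * lam * hmu
        clear_value q
        clear_value lam
        refine final q hqseg ?_
        have hax : a ^ 2 = dist p q ^ 2 + (lam * d) ^ 2 := by linear_combination -hh2
        have hby : b ^ 2 = dist p q ^ 2 + ((1 - lam) * d) ^ 2 := by
          linear_combination hb2 - hh2 - 2 * hmu
        exact my_aux_mid t a b d (dist p q) (lam * d) ((1 - lam) * d) ht ha hb
          dist_nonneg (mul_nonneg hlam0 hd0) (mul_nonneg (by linarith) hd0)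
          (by ring) hax hby habt
end

section
/- Let t ≥ 1 be a real number, let u, v ∈ EuclideanSpace ℝ (Fin 2), let m ≥ 1 and let p : Fin (m+1) → EuclideanSpace ℝ (Fin 2) be a polygonal path with p 0 = u, p m = v and total length ∑_{k<m} dist (p k) (p (k+1)) ≤ t · dist u v. Then the Hausdorff distance between the trace of p and the segment joining u and v satisfies Metric.hausdorffDist (⋃_{k<m} segment ℝ (p k) (p (k+1))) (segment ℝ u v) ≤ (Real.sqrt (t^2 − 1) / 2) · dist u v. -/
open RealInnerProductSpace

lemma key_calc (t d r α β a b : ℝ) (ht : 1 ≤ t) (hd : 0 ≤ d) (hr : 0 ≤ r)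
    (hα : 0 ≤ α) (hβ : 0 ≤ β) (hαβ : α + β = d)
    (ha0 : 0 ≤ a) (hb0 : 0 ≤ b)
    (ha : r ^ 2 + α ^ 2 ≤ a ^ 2) (hb : r ^ 2 + β ^ 2 ≤ b ^ 2)
    (hab : a + b ≤ t * d) : r ≤ Real.sqrt (t ^ 2 - 1) / 2 * d := by
  have h1 : (r ^ 2 + α * β) ^ 2 ≤ (r ^ 2 + α ^ 2) * (r ^ 2 + β ^ 2) := by
    nlinarith [sq_nonneg (r * (α - β))]
  have h2 : (r ^ 2 + α ^ 2) * (r ^ 2 + β ^ 2) ≤ a ^ 2 * b ^ 2 := by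
    apply mul_le_mul ha hb (by positivity) (sq_nonneg a)
  have h3 : r ^ 2 + α * β ≤ a * b := by
    nlinarith [mul_nonneg ha0 hb0, mul_nonneg hα hβ, sq_nonneg r]
  have hab2 : (a + b) * (a + b) ≤ (t * d) * (t * d) :=
    mul_le_mul hab hab (add_nonneg ha0 hb0) ((add_nonneg ha0 hb0).trans hab)
  have hd2 : d ^ 2 = α ^ 2 + 2 * (α * β) + β ^ 2 := by rw [← hαβ]; ring
  have h4 : 4 * r ^ 2 + d ^ 2 ≤ (t * d) ^ 2 := by nlinarith [hab2, ha, hb, h3]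
  have ht' : (0:ℝ) ≤ t ^ 2 - 1 := by nlinarith
  have hs : Real.sqrt (t ^ 2 - 1) ^ 2 = t ^ 2 - 1 := Real.sq_sqrt ht'
  have h5 : r ^ 2 ≤ (Real.sqrt (t ^ 2 - 1) / 2 * d) ^ 2 := by nlinarith [h4]
  have h6 : (0:ℝ) ≤ Real.sqrt (t ^ 2 - 1) / 2 * d :=
    mul_nonneg (div_nonneg (Real.sqrt_nonneg _) (by norm_num)) hd
  calc r = Real.sqrt (r ^ 2) := (Real.sqrt_sq hr).symm
    _ ≤ Real.sqrt ((Real.sqrt (t ^ 2 - 1) / 2 * d) ^ 2) := Real.sqrt_le_sqrt h5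
    _ = Real.sqrt (t ^ 2 - 1) / 2 * d := Real.sqrt_sq h6

lemma ellipse_lemma (t : ℝ) (ht : 1 ≤ t) (u v x : EuclideanSpace ℝ (Fin 2))
    (h : dist u x + dist x v ≤ t * dist u v) :
    ∃ w ∈ segment ℝ u v, dist x w ≤ Real.sqrt (t ^ 2 - 1) / 2 * dist u v := by
  have hcompact : IsCompact (segment ℝ u v) := by
    rw [segment_eq_image]
    exact (isCompact_Icc.image (by fun_prop))
  obtain ⟨w, hw, hmin⟩ := exists_norm_eq_iInf_of_complete_convex
    ⟨u, left_mem_segment ℝ u v⟩ hcompact.isClosed.isComplete (convex_segment u v) x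
  have hproj := (norm_eq_iInf_iff_real_inner_le_zero (convex_segment u v) hw).1 hmin
  refine ⟨w, hw, ?_⟩
  have hu := hproj u (left_mem_segment ℝ u v)
  have hv := hproj v (right_mem_segment ℝ u v)
  have ha : ‖x - w‖ ^ 2 + ‖u - w‖ ^ 2 ≤ ‖x - u‖ ^ 2 := by
    have e : x - u = (x - w) - (u - w) := by abel
    have h2 := norm_sub_sq_real (x - w) (u - w)
    rw [← e] at h2
    linarith
  have hb : ‖x - w‖ ^ 2 + ‖v - w‖ ^ 2 ≤ ‖x - v‖ ^ 2 := by
    have e : x - v = (x - w) - (v - w) := by abel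
    have h2 := norm_sub_sq_real (x - w) (v - w)
    rw [← e] at h2
    linarith
  have hαβ : ‖u - w‖ + ‖v - w‖ = dist u v := by
    have h2 := dist_add_dist_of_mem_segment hw
    simp only [dist_eq_norm] at h2 ⊢
    rw [norm_sub_rev w v] at h2
    exact h2
  have h' : ‖x - u‖ + ‖x - v‖ ≤ t * dist u v := by
    rw [dist_eq_norm, dist_eq_norm, norm_sub_rev u x] at h
    exact h
  have := key_calc t (dist u v) ‖x - w‖ ‖u - w‖ ‖v - w‖ ‖x - u‖ ‖x - v‖
    ht dist_nonneg (norm_nonneg _) (norm_nonneg _) (norm_nonneg _) hαβ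
    (norm_nonneg _) (norm_nonneg _) ha hb h'
  rwa [dist_eq_norm]

lemma path_split (m : ℕ) (p : Fin (m + 1) → EuclideanSpace ℝ (Fin 2)) (k : Fin m)
    (x : EuclideanSpace ℝ (Fin 2)) (hx : x ∈ segment ℝ (p k.castSucc) (p k.succ)) :
    dist (p 0) x + dist x (p (Fin.last m)) ≤ ∑ j : Fin m, dist (p j.castSucc) (p j.succ) := by
  set q : ℕ → EuclideanSpace ℝ (Fin 2) :=
    fun n => p ⟨min n m, Nat.lt_succ_of_le (min_le_right n m)⟩ with hq
  have hq0 : q 0 = p 0 := by apply congrArg p; apply Fin.ext; simp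
  have hqm : q m = p (Fin.last m) := by apply congrArg p; apply Fin.ext; simp [Fin.last]
  have hqc : ∀ j : Fin m, q j = p j.castSucc := by
    intro j; apply congrArg p; apply Fin.ext; simp [Nat.min_eq_left j.isLt.le]
  have hqs : ∀ j : Fin m, q (j + 1) = p j.succ := by
    intro j; apply congrArg p; apply Fin.ext; simp [Nat.min_eq_left j.isLt]
  have hsum : ∑ j : Fin m, dist (p j.castSucc) (p j.succ)
      = ∑ i ∈ Finset.range m, dist (q i) (q (i + 1)) := by
    rw [← Fin.sum_univ_eq_sum_range (fun i => dist (q i) (q (i + 1))) m]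
    exact Finset.sum_congr rfl fun j _ => by rw [hqc j, hqs j]
  have hk1m : (k : ℕ) + 1 ≤ m := k.isLt
  have hsplit : ∑ i ∈ Finset.range m, dist (q i) (q (i + 1))
      = ∑ i ∈ Finset.range k, dist (q i) (q (i + 1))
        + (dist (q k) (q (k + 1)) + ∑ i ∈ Finset.Ico ((k : ℕ) + 1) m, dist (q i) (q (i + 1))) := by
    rw [← Finset.sum_range_add_sum_Ico _ (le_of_lt k.isLt),
      Finset.sum_eq_sum_Ico_succ_bot k.isLt]
  have h1 : dist (q 0) (q k) ≤ ∑ i ∈ Finset.range k, dist (q i) (q (i + 1)) :=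
    dist_le_range_sum_dist q k
  have h2 : dist (q ((k : ℕ) + 1)) (q m)
      ≤ ∑ i ∈ Finset.Ico ((k : ℕ) + 1) m, dist (q i) (q (i + 1)) :=
    dist_le_Ico_sum_dist q hk1m
  have hx' : x ∈ segment ℝ (q k) (q (k + 1)) := by rw [hqc k, hqs k]; exact hx
  have hseg : dist (q k) x + dist x (q (k + 1)) = dist (q k) (q (k + 1)) :=
    dist_add_dist_of_mem_segment hx'
  have t1 : dist (p 0) x ≤ dist (q 0) (q k) + dist (q k) x := by
    rw [← hq0]; exact dist_triangle _ _ _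
  have t2 : dist x (p (Fin.last m)) ≤ dist x (q ((k : ℕ) + 1)) + dist (q ((k : ℕ) + 1)) (q m) := by
    rw [← hqm]; exact dist_triangle _ _ _
  rw [hsum, hsplit]
  linarith

/-- Every `t`-path is a `(√(t² − 1) / 2)`-Hausdorff-path: if a polygonal path from `u` to `v`
has length at most `t · dist u v`, then the Hausdorff distance between its trace and the
segment `uv` is at most `(√(t² − 1) / 2) · dist u v`. -/
theorem tpath_is_hausdorff_path (t : ℝ) (ht : 1 ≤ t)
    (u v : EuclideanSpace ℝ (Fin 2)) (m : ℕ) (hm : 1 ≤ m)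
    (p : Fin (m + 1) → EuclideanSpace ℝ (Fin 2))
    (hpu : p 0 = u) (hpv : p (Fin.last m) = v)
    (hlen : ∑ k : Fin m, dist (p k.castSucc) (p k.succ) ≤ t * dist u v) :
    Metric.hausdorffDist (⋃ k : Fin m, segment ℝ (p k.castSucc) (p k.succ))
      (segment ℝ u v) ≤ Real.sqrt (t ^ 2 - 1) / 2 * dist u v := by
  set T := ⋃ k : Fin m, segment ℝ (p k.castSucc) (p k.succ) with hTdef
  have hB : (0:ℝ) ≤ Real.sqrt (t ^ 2 - 1) / 2 * dist u v :=
    mul_nonneg (div_nonneg (Real.sqrt_nonneg _) (by norm_num)) dist_nonneg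
  have hsplit : ∀ x ∈ T, dist u x + dist x v ≤ t * dist u v := by
    intro x hx
    rw [hTdef, Set.mem_iUnion] at hx
    obtain ⟨k, hk⟩ := hx
    have h2 := path_split m p k x hk
    rw [hpu, hpv] at h2
    exact h2.trans hlen
  -- the points q and the segments s, ℕ-indexed
  set q : ℕ → EuclideanSpace ℝ (Fin 2) :=
    fun n => p ⟨min n m, Nat.lt_succ_of_le (min_le_right n m)⟩ with hq
  set s : ℕ → Set (EuclideanSpace ℝ (Fin 2)) := fun n => segment ℝ (q n) (q (n + 1)) with hs
  have hqc : ∀ j : Fin m, q j = p j.castSucc := by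
    intro j; apply congrArg p; apply Fin.ext; simp [Nat.min_eq_left j.isLt.le]
  have hqs : ∀ j : Fin m, q (j + 1) = p j.succ := by
    intro j; apply congrArg p; apply Fin.ext; simp [Nat.min_eq_left j.isLt]
  have huT : u ∈ T := by
    rw [← hpu, hTdef]
    apply Set.mem_iUnion.2 ⟨⟨0, hm⟩, ?_⟩
    have h0 : (⟨0, hm⟩ : Fin m).castSucc = 0 := by ext; simp
    rw [h0]
    exact left_mem_segment ℝ _ _
  have hvT : v ∈ T := by
    rw [← hpv, hTdef]
    apply Set.mem_iUnion.2 ⟨⟨m - 1, by omega⟩, ?_⟩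
    have h0 : (⟨m - 1, by omega⟩ : Fin m).succ = Fin.last m := by
      ext; simp [Fin.last]; omega
    rw [h0]
    exact right_mem_segment ℝ _ _
  have hTs : T = ⋃ n : ℕ, s n := by
    apply Set.Subset.antisymm
    · refine Set.iUnion_subset fun k => ?_
      have h1 : segment ℝ (p k.castSucc) (p k.succ) = s k :=
        (congrArg₂ (segment ℝ) (hqc k) (hqs k)).symm
      rw [h1]; exact Set.subset_iUnion s ((k : ℕ))
    · refine Set.iUnion_subset fun n => ?_
      by_cases hn : n < m
      · have h1 : s n = segment ℝ (p (⟨n, hn⟩ : Fin m).castSucc) (p (⟨n, hn⟩ : Fin m).succ) := by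
          rw [hs]
          exact congrArg₂ (segment ℝ) (hqc ⟨n, hn⟩) (hqs ⟨n, hn⟩)
        rw [h1, hTdef]
        intro z hz
        exact Set.mem_iUnion.2 ⟨⟨n, hn⟩, hz⟩
      · intro z hz
        have h1 : q n = p (Fin.last m) := by
          apply congrArg p; apply Fin.ext; simp [Fin.last]; omega
        have h2 : q (n + 1) = p (Fin.last m) := by
          apply congrArg p; apply Fin.ext; simp [Fin.last]; omega
        rw [hs] at hz
        simp only [h1, h2, segment_same] at hz
        rw [Set.mem_singleton_iff] at hz
        rw [hz, hpv]
        exact hvT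
  have hconn : IsPreconnected T := by
    rw [hTs]
    exact IsPreconnected.iUnion_of_chain
      (fun n => (convex_segment _ _).isPreconnected)
      (fun n => ⟨q (n + 1), right_mem_segment ℝ _ _, left_mem_segment ℝ _ _⟩)
  have hgc : Continuous fun z : EuclideanSpace ℝ (Fin 2) => ⟪z - u, v - u⟫ :=
    (continuous_id.sub continuous_const).inner continuous_const
  have hICC := hconn.intermediate_value huT hvT hgc.continuousOn
  apply Metric.hausdorffDist_le_of_mem_dist hB
  · intro x hx
    exact ellipse_lemma t ht u v x (hsplit x hx)
  · intro y hy
    have hy' := hy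
    obtain ⟨s1, s2, hs1, hs2, hs12, hyeq⟩ := hy'
    have hyu : y - u = s2 • (v - u) := by
      rw [← hyeq]
      have h1 : s1 = 1 - s2 := by linarith
      rw [h1]; module
    have hyv : y - v = (-s1) • (v - u) := by
      rw [← hyeq]
      have h1 : s2 = 1 - s1 := by linarith
      rw [h1]; module
    have hmem : ⟪y - u, v - u⟫ ∈ Set.Icc ⟪u - u, v - u⟫ ⟪v - u, v - u⟫ := by
      rw [hyu, real_inner_smul_left, sub_self, inner_zero_left,
        real_inner_self_eq_norm_sq]
      constructor
      · exact mul_nonneg hs2 (sq_nonneg _)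
      · nlinarith [sq_nonneg ‖v - u‖]
    obtain ⟨x, hxT, hgx⟩ := hICC hmem
    have horth : ⟪x - y, v - u⟫ = 0 := by
      have e : x - y = (x - u) - (y - u) := by abel
      rw [e, inner_sub_left]
      exact sub_eq_zero.2 hgx
    have hzu : ⟪x - y, y - u⟫ = 0 := by
      rw [hyu, real_inner_smul_right, horth, mul_zero]
    have hzv : ⟪x - y, y - v⟫ = 0 := by
      rw [hyv, real_inner_smul_right, horth, mul_zero]
    have ha : ‖x - y‖ ^ 2 + ‖y - u‖ ^ 2 ≤ ‖x - u‖ ^ 2 := by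
      have e : x - u = (x - y) + (y - u) := by abel
      have h2 := norm_add_sq_real (x - y) (y - u)
      rw [← e] at h2
      rw [hzu] at h2
      linarith
    have hb : ‖x - y‖ ^ 2 + ‖y - v‖ ^ 2 ≤ ‖x - v‖ ^ 2 := by
      have e : x - v = (x - y) + (y - v) := by abel
      have h2 := norm_add_sq_real (x - y) (y - v)
      rw [← e] at h2
      rw [hzv] at h2
      linarith
    have hαβ : ‖y - u‖ + ‖y - v‖ = dist u v := by
      have h2 := dist_add_dist_of_mem_segment hy
      simp only [dist_eq_norm] at h2 ⊢
      rw [norm_sub_rev u y] at h2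
      exact h2
    have hab : ‖x - u‖ + ‖x - v‖ ≤ t * dist u v := by
      have h2 := hsplit x hxT
      rw [dist_eq_norm', dist_eq_norm] at h2
      exact h2
    have hfin := key_calc t (dist u v) ‖x - y‖ ‖y - u‖ ‖y - v‖ ‖x - u‖ ‖x - v‖
      ht dist_nonneg (norm_nonneg _) (norm_nonneg _) (norm_nonneg _) hαβ
      (norm_nonneg _) (norm_nonneg _) ha hb hab
    refine ⟨x, hxT, ?_⟩
    rw [dist_eq_norm, norm_sub_rev]
    exact hfin
end

section
/- Let t ≥ 1, let S be a finite set of points in EuclideanSpace ℝ (Fin 2) and let E ⊆ S × S be a symmetric edge set such that the graph (S, E) is a t-spanner: for all u, v ∈ S there exists m ≥ 1 and a sequence p : Fin (m+1) → S with p 0 = u, p m = v, (p k, p (k+1)) ∈ E for all k < m, and ∑_{k<m} dist (p k) (p (k+1)) ≤ t · dist u v. Then (S, E) is a (√(t²−1)/2)-Hausdorff-spanner: for all u, v ∈ S there exists such a sequence p (with consecutive pairs in E, from u to v) satisfying Metric.hausdorffDist (⋃_{k<m} segment ℝ (p k) (p (k+1))) (segment ℝ u v) ≤ (Real.sqrt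 (t^2 − 1) / 2) · dist u v. -/
set_option maxHeartbeats 1000000

/-- Minkowski-style bound. -/
lemma L1 {t A B α β h : ℝ} (ht : 1 ≤ t)
    (hA : 0 ≤ A) (hB : 0 ≤ B) (hα : 0 ≤ α) (hβ : 0 ≤ β) (h0 : 0 ≤ h)
    (eA : A ^ 2 = α ^ 2 + h ^ 2) (eB : B ^ 2 = β ^ 2 + h ^ 2)
    (hsum : A + B ≤ t * (α + β)) :
    2 * h ≤ Real.sqrt (t ^ 2 - 1) * (α + β) := by
  have hAB : α * β + h ^ 2 ≤ A * B := by
    nlinarith [mul_nonneg hA hB, sq_nonneg (α * h - β * h), mul_nonneg hα hβ,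
      sq_nonneg (A * B - α * β - h ^ 2), sq_nonneg (A * B + α * β + h ^ 2)]
  have key : 4 * h ^ 2 ≤ (t ^ 2 - 1) * (α + β) ^ 2 := by
    nlinarith [mul_nonneg (mul_nonneg (by linarith : (0:ℝ) ≤ t) hα) hβ]
  have h1 : Real.sqrt (4 * h ^ 2) ≤ Real.sqrt ((t ^ 2 - 1) * (α + β) ^ 2) :=
    Real.sqrt_le_sqrt key
  have h2 : Real.sqrt (4 * h ^ 2) = 2 * h := by
    rw [show (4 : ℝ) * h ^ 2 = (2 * h) ^ 2 by ring]
    exact Real.sqrt_sq (by linarith)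
  have h3 : Real.sqrt ((t ^ 2 - 1) * (α + β) ^ 2)
      = Real.sqrt (t ^ 2 - 1) * (α + β) := by
    rw [Real.sqrt_mul (by nlinarith : (0:ℝ) ≤ t ^ 2 - 1), Real.sqrt_sq (by linarith)]
  linarith [h1, h2.symm.le, h3.le]

lemma L2 {t r d : ℝ} (ht : 1 ≤ t) (hr : 0 ≤ r) (hd : 0 ≤ d)
    (h : r + Real.sqrt (r ^ 2 + d ^ 2) ≤ t * d) :
    r ≤ Real.sqrt (t ^ 2 - 1) / 2 * d := by
  have hb0 : (0:ℝ) ≤ t ^ 2 - 1 := by nlinarith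
  set b := Real.sqrt (t ^ 2 - 1) with hbdef
  have hb : b ^ 2 = t ^ 2 - 1 := Real.sq_sqrt hb0
  have hbn : 0 ≤ b := Real.sqrt_nonneg _
  have hbt : b ≤ t := by
    have h1 : b ≤ Real.sqrt (t ^ 2) := Real.sqrt_le_sqrt (by linarith)
    have h2 : Real.sqrt (t ^ 2) = t := Real.sqrt_sq (by linarith)
    linarith
  set s := Real.sqrt (r ^ 2 + d ^ 2) with hsdef
  have hs : s ^ 2 = r ^ 2 + d ^ 2 := Real.sq_sqrt (by positivity)
  have hsn : 0 ≤ s := Real.sqrt_nonneg _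
  rcases eq_or_lt_of_le hd with hd0 | hd0
  · have : s ^ 2 = r ^ 2 := by rw [hs, ← hd0]; ring
    have hsr : s = r := by nlinarith
    nlinarith
  · -- s ≤ t*d - r, square it
    have h2 : 2 * t * d * r ≤ (t ^ 2 - 1) * d ^ 2 := by nlinarith
    have h3 : 2 * t * d * r ≤ t * b * d ^ 2 := by
      nlinarith [mul_le_mul_of_nonneg_right hbt (mul_nonneg hbn (sq_nonneg d))]
    nlinarith [mul_pos (show (0:ℝ) < t by linarith) hd0]

open RealInnerProductSpace

variable {V : Type*} [NormedAddCommGroup V] [InnerProductSpace ℝ V]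

/-- Ellipse: point with bounded dist-sum whose projection lands inside the segment. -/
lemma G1 {t : ℝ} (ht : 1 ≤ t) {u v x : V} {τ : ℝ} (hτ0 : 0 ≤ τ) (hτ1 : τ ≤ 1)
    (hproj : ⟪x - u, v - u⟫ = τ * ‖v - u‖ ^ 2)
    (hx : dist u x + dist x v ≤ t * dist u v) :
    dist x (u + τ • (v - u)) ≤ Real.sqrt (t ^ 2 - 1) / 2 * dist u v := by
  set z := v - u with hz
  set n := x - u - τ • z with hn
  have horth : ⟪n, z⟫ = 0 := by
    rw [hn, inner_sub_left, real_inner_smul_left, hproj, real_inner_self_eq_norm_sq]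
    ring
  have hd : dist u v = ‖z‖ := by rw [dist_eq_norm', hz]
  have hA : (dist u x) ^ 2 = (τ * ‖z‖) ^ 2 + ‖n‖ ^ 2 := by
    have hxu : x - u = τ • z + n := by rw [hn]; abel
    rw [dist_eq_norm', hxu, @norm_add_sq_real, real_inner_smul_left,
      real_inner_comm n z, horth, norm_smul]
    simp [abs_mul, mul_pow, sq_abs]
    try ring
  have hB : (dist x v) ^ 2 = ((1 - τ) * ‖z‖) ^ 2 + ‖n‖ ^ 2 := by
    have hxv : x - v = n - (1 - τ) • z := by rw [hn, hz]; module
    rw [dist_eq_norm, hxv, @norm_sub_sq_real, real_inner_smul_right, horth, norm_smul]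
    simp [abs_mul, mul_pow, sq_abs]
    try ring
  have hxy : dist x (u + τ • z) = ‖n‖ := by
    rw [dist_eq_norm, hn]; congr 1; abel
  have hkey := L1 ht dist_nonneg dist_nonneg
    (mul_nonneg hτ0 (norm_nonneg z)) (mul_nonneg (by linarith) (norm_nonneg z))
    (norm_nonneg n) hA hB (by rw [hd] at hx; convert hx using 2; ring)
  rw [hxy, hd]
  have : τ * ‖z‖ + (1 - τ) * ‖z‖ = ‖z‖ := by ring
  rw [this] at hkey
  linarith

/-- Point whose projection falls before `u`. -/
lemma G2 {t : ℝ} (ht : 1 ≤ t) {u v x : V}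
    (hproj : ⟪x - u, v - u⟫ ≤ 0)
    (hx : dist u x + dist x v ≤ t * dist u v) :
    dist u x ≤ Real.sqrt (t ^ 2 - 1) / 2 * dist u v := by
  set r := dist u x with hr
  set d := dist u v with hd
  have hBsq : (dist x v) ^ 2 = r ^ 2 - 2 * ⟪x - u, v - u⟫ + d ^ 2 := by
    have h1 : x - v = (x - u) - (v - u) := by abel
    rw [dist_eq_norm, h1, @norm_sub_sq_real, hr, hd, dist_eq_norm', dist_eq_norm']
  have hge : Real.sqrt (r ^ 2 + d ^ 2) ≤ dist x v := by
    have h1 : r ^ 2 + d ^ 2 ≤ (dist x v) ^ 2 := by rw [hBsq]; linarith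
    calc Real.sqrt (r ^ 2 + d ^ 2) ≤ Real.sqrt ((dist x v) ^ 2) := Real.sqrt_le_sqrt h1
      _ = dist x v := Real.sqrt_sq dist_nonneg
  exact L2 ht dist_nonneg dist_nonneg (by linarith)
section Main

open RealInnerProductSpace Metric Finset

/-- Any `t`-spanner of a planar point set is a `(√(t² − 1) / 2)`-Hausdorff-spanner. -/
theorem tspanner_is_hausdorff_spanner (t : ℝ) (ht : 1 ≤ t)
    (S : Finset (EuclideanSpace ℝ (Fin 2)))
    (E : Set (EuclideanSpace ℝ (Fin 2) × EuclideanSpace ℝ (Fin 2)))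
    (hES : ∀ e ∈ E, e.1 ∈ S ∧ e.2 ∈ S)
    (hsymm : ∀ a b, (a, b) ∈ E → (b, a) ∈ E)
    (hspan : ∀ u ∈ S, ∀ v ∈ S, ∃ m : ℕ, 1 ≤ m ∧
      ∃ p : Fin (m + 1) → EuclideanSpace ℝ (Fin 2),
        p 0 = u ∧ p (Fin.last m) = v ∧
        (∀ k : Fin m, (p k.castSucc, p k.succ) ∈ E) ∧
        ∑ k : Fin m, dist (p k.castSucc) (p k.succ) ≤ t * dist u v) :
    ∀ u ∈ S, ∀ v ∈ S, ∃ m : ℕ, 1 ≤ m ∧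
      ∃ p : Fin (m + 1) → EuclideanSpace ℝ (Fin 2),
        p 0 = u ∧ p (Fin.last m) = v ∧
        (∀ k : Fin m, (p k.castSucc, p k.succ) ∈ E) ∧
        Metric.hausdorffDist (⋃ k : Fin m, segment ℝ (p k.castSucc) (p k.succ))
          (segment ℝ u v) ≤ Real.sqrt (t ^ 2 - 1) / 2 * dist u v := by
  intro u hu v hv
  obtain ⟨m, hm, p, hp0, hpl, hpE, hsum⟩ := hspan u hu v hv
  refine ⟨m, hm, p, hp0, hpl, hpE, ?_⟩
  -- notation
  set c : ℝ := Real.sqrt (t ^ 2 - 1) / 2 with hc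
  have hc0 : 0 ≤ c := by positivity
  -- ℕ-indexed version of the path
  set q : ℕ → EuclideanSpace ℝ (Fin 2) :=
    fun i => p ⟨min i m, lt_of_le_of_lt (min_le_right _ _) (Nat.lt_succ_self m)⟩ with hq
  have hq0 : q 0 = u := by
    rw [← hp0]; exact congrArg p (Fin.val_injective (by simp))
  have hqm : q m = v := by
    rw [← hpl]; exact congrArg p (Fin.val_injective (by simp [Fin.last]))
  have hqc : ∀ k : Fin m, q k.val = p k.castSucc := by
    intro k
    exact congrArg p (Fin.val_injective (by simp [Nat.min_eq_left k.isLt.le]))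
  have hqs : ∀ k : Fin m, q (k.val + 1) = p k.succ := by
    intro k
    exact congrArg p (Fin.val_injective (by simp [Nat.min_eq_left k.isLt]))
  set D : ℕ → ℝ := fun i => dist (q i) (q (i + 1)) with hD
  have hsum' : ∑ i ∈ Finset.range m, D i ≤ t * dist u v := by
    rw [← Fin.sum_univ_eq_sum_range D m]
    calc ∑ k : Fin m, D k.val = ∑ k : Fin m, dist (p k.castSucc) (p k.succ) := by
          refine Finset.sum_congr rfl fun k _ => ?_
          rw [hD]; simp only []
          rw [hqc k, hqs k]
      _ ≤ t * dist u v := hsum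
  set T : Set (EuclideanSpace ℝ (Fin 2)) :=
    ⋃ k : Fin m, segment ℝ (p k.castSucc) (p k.succ) with hT
  have hTeq : T = ⋃ i ∈ Finset.range m, segment ℝ (q i) (q (i + 1)) := by
    ext x
    simp only [hT, Set.mem_iUnion, Finset.mem_range, exists_prop]
    constructor
    · rintro ⟨k, hk⟩
      exact ⟨k.val, k.isLt, by rw [hqc k, hqs k]; exact hk⟩
    · rintro ⟨i, hi, hx⟩
      exact ⟨⟨i, hi⟩, by rw [← hqc ⟨i, hi⟩, ← hqs ⟨i, hi⟩]; exact hx⟩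
  -- every point of the trace satisfies the ellipse bound
  have H : ∀ x ∈ T, dist u x + dist x v ≤ t * dist u v := by
    intro x hx
    rw [hT] at hx
    obtain ⟨k, hk⟩ := Set.mem_iUnion.1 hx
    have hk1 : k.val + 1 ≤ m := k.isLt
    have h1 : dist u (p k.castSucc) ≤ ∑ i ∈ Finset.range k.val, D i := by
      have := dist_le_range_sum_dist q k.val
      rwa [hq0, hqc k] at this
    have h2 : dist (p k.succ) v ≤ ∑ i ∈ Finset.Ico (k.val + 1) m, D i := by
      have h := dist_le_range_sum_dist (fun j => q (k.val + 1 + j)) (m - (k.val + 1))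
      rw [show k.val + 1 + 0 = k.val + 1 by ring,
        show k.val + 1 + (m - (k.val + 1)) = m by omega, hqs k, hqm] at h
      rw [Finset.sum_Ico_eq_sum_range]
      exact h
    have h3 : dist (p k.castSucc) x + dist x (p k.succ) = D k.val := by
      rw [hD]; simp only []
      rw [hqc k, hqs k]
      exact dist_add_dist_of_mem_segment hk
    have h4 : ∑ i ∈ Finset.range (k.val + 1), D i + ∑ i ∈ Finset.Ico (k.val + 1) m, D i
        = ∑ i ∈ Finset.range m, D i := Finset.sum_range_add_sum_Ico D hk1
    have h5 : ∑ i ∈ Finset.range (k.val + 1), D i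
        = ∑ i ∈ Finset.range k.val, D i + D k.val := Finset.sum_range_succ D k.val
    have t1 := dist_triangle u (p k.castSucc) x
    have t2 := dist_triangle x (p k.succ) v
    linarith
  -- endpoints lie on the trace
  have huT : u ∈ T := by
    rw [hTeq]
    have : u ∈ segment ℝ (q 0) (q 1) := hq0 ▸ left_mem_segment ℝ (q 0) (q 1)
    exact Set.mem_biUnion (Finset.mem_range.2 hm) this
  have hvT : v ∈ T := by
    rw [hTeq]
    have hm1 : m - 1 < m := by omega
    have : v ∈ segment ℝ (q (m - 1)) (q (m - 1 + 1)) := by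
      rw [show m - 1 + 1 = m by omega, ← hqm]
      exact right_mem_segment ℝ _ _
    exact Set.mem_biUnion (Finset.mem_range.2 hm1) this
  -- the trace is connected
  have hconn : IsPreconnected T := by
    rw [hTeq]
    have aux : ∀ n, 1 ≤ n → n ≤ m →
        IsPreconnected (⋃ i ∈ Finset.range n, segment ℝ (q i) (q (i + 1))) ∧
        q n ∈ (⋃ i ∈ Finset.range n, segment ℝ (q i) (q (i + 1))) := by
      intro n hn
      induction n, hn using Nat.le_induction with
      | base =>
        intro _
        constructor
        · simp only [Finset.range_one, Finset.set_biUnion_singleton]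
          exact (convex_segment _ _).isPreconnected
        · simp only [Finset.range_one, Finset.set_biUnion_singleton]
          exact right_mem_segment ℝ _ _
      | succ n hn ih =>
        intro hnm
        have ih' := ih (by omega)
        rw [Finset.range_add_one, Finset.set_biUnion_insert]
        constructor
        · exact IsPreconnected.union (q n) (left_mem_segment ℝ _ _) ih'.2
            (convex_segment _ _).isPreconnected ih'.1
        · exact Set.mem_union_left _ (right_mem_segment ℝ _ _)
    exact (aux m hm le_rfl).1
  -- now the Hausdorff bound
  refine Metric.hausdorffDist_le_of_infDist (by positivity) ?_ ?_
  · -- trace within c * d of the segment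
    intro x hx
    have hsx := H x hx
    rcases eq_or_ne u v with huv | huv
    · subst huv
      have h1 : dist u x + dist x u ≤ 0 := by
        have : dist u u = 0 := dist_self u
        nlinarith [hsx]
      have hx0 : dist x u = 0 := by
        have h2 : dist u x = dist x u := dist_comm u x
        have h3 : (0:ℝ) ≤ dist x u := dist_nonneg
        linarith
      calc Metric.infDist x (segment ℝ u u) ≤ dist x u :=
            Metric.infDist_le_dist_of_mem (left_mem_segment ℝ u u)
        _ = c * dist u u := by rw [hx0, dist_self, mul_zero]
    · have hd0 : 0 < dist u v := dist_pos.2 huv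
      have hz0 : 0 < ‖v - u‖ := by rw [dist_eq_norm'] at hd0; exact hd0
      set τ : ℝ := ⟪x - u, v - u⟫ / ‖v - u‖ ^ 2 with hτdef
      have hproj : ⟪x - u, v - u⟫ = τ * ‖v - u‖ ^ 2 := by
        rw [hτdef, div_mul_cancel₀ _ (by positivity)]
      rcases le_or_gt 0 τ with hτ0 | hτ0
      · rcases le_or_gt τ 1 with hτ1 | hτ1
        · have hg := G1 ht hτ0 hτ1 hproj hsx
          have hy : u + τ • (v - u) ∈ segment ℝ u v := by
            rw [segment_eq_image']
            exact ⟨τ, ⟨hτ0, hτ1⟩, rfl⟩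
          calc Metric.infDist x (segment ℝ u v) ≤ dist x (u + τ • (v - u)) :=
                Metric.infDist_le_dist_of_mem hy
            _ ≤ c * dist u v := hg
        · have hp2 : ⟪x - v, u - v⟫ ≤ 0 := by
            rw [show x - v = (x - u) - (v - u) by abel,
              show u - v = -(v - u) by abel, inner_neg_right, inner_sub_left,
              hproj, real_inner_self_eq_norm_sq]
            nlinarith [sq_nonneg ‖v - u‖]
          have hg := G2 ht hp2
            (by rw [dist_comm v x, dist_comm x u, dist_comm v u]; linarith)
          rw [dist_comm v u] at hg
          calc Metric.infDist x (segment ℝ u v) ≤ dist x v :=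
                Metric.infDist_le_dist_of_mem (right_mem_segment ℝ u v)
            _ = dist v x := dist_comm x v
            _ ≤ c * dist u v := hg
      · have hp1 : ⟪x - u, v - u⟫ ≤ 0 := by
          rw [hproj]
          exact mul_nonpos_of_nonpos_of_nonneg hτ0.le (by positivity)
        have hg := G2 ht hp1 hsx
        calc Metric.infDist x (segment ℝ u v) ≤ dist x u :=
              Metric.infDist_le_dist_of_mem (left_mem_segment ℝ u v)
          _ = dist u x := dist_comm x u
          _ ≤ c * dist u v := hg
  · -- segment within c * d of the trace
    intro y hy
    rcases eq_or_ne u v with huv | huv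
    · subst huv
      rw [segment_same] at hy
      rw [hy]
      calc Metric.infDist u T ≤ dist u u := Metric.infDist_le_dist_of_mem huT
        _ = c * dist u u := by simp
    · have hd0 : 0 < dist u v := dist_pos.2 huv
      have hz0 : 0 < ‖v - u‖ := by rw [dist_eq_norm'] at hd0; exact hd0
      rw [segment_eq_image'] at hy
      obtain ⟨s, ⟨hs0, hs1⟩, hys⟩ := hy
      set f : EuclideanSpace ℝ (Fin 2) → ℝ := fun w => ⟪w - u, v - u⟫ with hf
      have hfc : Continuous f := (continuous_id.sub continuous_const).inner continuous_const
      have hfu : f u = 0 := by simp [hf]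
      have hfv : f v = ‖v - u‖ ^ 2 := by
        rw [hf]; exact real_inner_self_eq_norm_sq _
      have hmem : s * ‖v - u‖ ^ 2 ∈ Set.Icc (f u) (f v) := by
        rw [hfu, hfv]
        exact ⟨mul_nonneg hs0 (sq_nonneg _), mul_le_of_le_one_left (sq_nonneg _) hs1⟩
      obtain ⟨x, hxT, hfx⟩ := hconn.intermediate_value huT hvT hfc.continuousOn hmem
      have hproj : ⟪x - u, v - u⟫ = s * ‖v - u‖ ^ 2 := hfx
      have hg := G1 ht hs0 hs1 hproj (H x hxT)
      calc Metric.infDist y T ≤ dist y x := Metric.infDist_le_dist_of_mem hxT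
        _ = dist x (u + s • (v - u)) := by
              have hy2 : y = u + s • (v - u) := hys.symm
              rw [hy2, dist_comm]
        _ ≤ c * dist u v := hg

end Main
end

section
/- Let t ≥ 1, let u, v ∈ EuclideanSpace ℝ (Fin 2), let m ≥ 1 and let p : Fin (m+1) → EuclideanSpace ℝ (Fin 2) be a polygonal path with p 0 = u, p m = v and total length ∑_{k<m} dist (p k) (p (k+1)) ≤ t · dist u v. Then p admits a Fréchet matching to the segment from u to v within (t/2) · dist u v. -/
open scoped RealInnerProductSpace

section auxLemmas

variable {E : Type*} [NormedAddCommGroup E] [NormedSpace ℝ E]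

lemma dist_interp_left' (a b : E) {θ : ℝ} (h0 : 0 ≤ θ) :
    dist (a + θ • (b - a)) a = θ * dist a b := by
  rw [dist_eq_norm, add_sub_cancel_left, norm_smul, Real.norm_eq_abs, abs_of_nonneg h0,
    dist_eq_norm, norm_sub_rev]

lemma dist_interp_right' (a b : E) {θ : ℝ} (h1 : θ ≤ 1) :
    dist (a + θ • (b - a)) b = (1 - θ) * dist a b := by
  have h : a + θ • (b - a) - b = -((1 - θ) • (b - a)) := by
    rw [sub_smul, one_smul, neg_sub]; abel
  rw [dist_eq_norm, h, norm_neg, norm_smul, Real.norm_eq_abs, abs_of_nonneg (by linarith),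
    dist_eq_norm, norm_sub_rev]

end auxLemmas

lemma combo_identity' {E : Type*} [NormedAddCommGroup E] [InnerProductSpace ℝ E]
    (x u v : E) (σ : ℝ) :
    dist x (u + σ • (v - u)) ^ 2 =
      (1 - σ) * dist x u ^ 2 + σ * dist x v ^ 2 - σ * (1 - σ) * dist u v ^ 2 := by
  have h2 : dist x v ^ 2 = ‖x - u‖^2 - 2 * ⟪x - u, v - u⟫ + ‖v - u‖^2 := by
    have : x - v = (x - u) - (v - u) := by abel
    rw [dist_eq_norm, this, norm_sub_sq_real]
  have h3 : dist u v ^ 2 = ‖v - u‖^2 := by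
    rw [dist_eq_norm, ← norm_neg]; congr 1; abel
  have h1 : dist x (u + σ • (v - u)) ^ 2
      = ‖x - u‖^2 - 2 * (σ * ⟪x - u, v - u⟫) + σ^2 * ‖v - u‖^2 := by
    rw [dist_eq_norm, sub_add_eq_sub_sub, norm_sub_sq_real, real_inner_smul_right,
      norm_smul, mul_pow, Real.norm_eq_abs, sq_abs]
  rw [h1, h2, h3, dist_eq_norm]
  ring

lemma tail_bound' {E : Type*} [NormedAddCommGroup E] [InnerProductSpace ℝ E]
    (t σ L : ℝ) (ht : 1 ≤ t) (x u v : E)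
    (hdL : dist u v ≤ L) (hLtd : L ≤ t * dist u v)
    (hσ0 : 0 ≤ σ) (hσ1 : σ ≤ 1)
    (ha : dist x u ≤ σ * L) (hb : dist x v ≤ (1 - σ) * L) :
    dist x (u + σ • (v - u)) ≤ t / 2 * dist u v := by
  have hd0 : 0 ≤ dist u v := dist_nonneg
  have ha2 : dist x u ^ 2 ≤ (σ * L) ^ 2 := by nlinarith [dist_nonneg (x := x) (y := u)]
  have hb2 : dist x v ^ 2 ≤ ((1 - σ) * L) ^ 2 := by nlinarith [dist_nonneg (x := x) (y := v)]
  have hkey : dist x (u + σ • (v - u)) ^ 2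
      ≤ σ * (1 - σ) * L ^ 2 - σ * (1 - σ) * dist u v ^ 2 := by
    rw [combo_identity']
    have e1 : (1 - σ) * dist x u ^ 2 ≤ (1 - σ) * (σ * L) ^ 2 :=
      mul_le_mul_of_nonneg_left ha2 (by linarith)
    have e2 : σ * dist x v ^ 2 ≤ σ * ((1 - σ) * L) ^ 2 :=
      mul_le_mul_of_nonneg_left hb2 hσ0
    nlinarith [e1, e2]
  have hLd2 : 0 ≤ L ^ 2 - dist u v ^ 2 := by nlinarith
  have h14 : σ * (1 - σ) ≤ 1 / 4 := by nlinarith [sq_nonneg (σ - 1 / 2)]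
  have hL2 : L ^ 2 ≤ t ^ 2 * dist u v ^ 2 := by nlinarith
  have step1 : σ * (1 - σ) * L ^ 2 - σ * (1 - σ) * dist u v ^ 2
      ≤ 1 / 4 * (L ^ 2 - dist u v ^ 2) := by nlinarith [h14, hLd2]
  have step2 : 1 / 4 * (L ^ 2 - dist u v ^ 2) ≤ (t / 2 * dist u v) ^ 2 := by
    nlinarith [sq_nonneg (dist u v)]
  have hrhs : 0 ≤ t / 2 * dist u v := mul_nonneg (by linarith) dist_nonneg
  rw [← Real.sqrt_sq (dist_nonneg (x := x) (y := u + σ • (v - u))), ← Real.sqrt_sq hrhs]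
  exact Real.sqrt_le_sqrt (by linarith [hkey, step1, step2])

/-- The running "arc length" of the polygonal path with edge lengths `D` under the
uniform parametrization of `[0,1]` by `m` segments. -/
noncomputable def pathLen' (D : ℕ → ℝ) (m : ℕ) (τ : ℝ) : ℝ :=
  ∑ j ∈ Finset.range m, D j * min (max (τ * m - j) 0) 1

lemma pathLen'_continuous (D : ℕ → ℝ) (m : ℕ) : Continuous (pathLen' D m) := by
  apply continuous_finset_sum
  intro j _
  exact continuous_const.mul ((((continuous_id.mul continuous_const).sub
    continuous_const).max continuous_const).min continuous_const)

lemma pathLen'_mono (D : ℕ → ℝ) (m : ℕ) (hD : ∀ j, 0 ≤ D j) : Monotone (pathLen' D m) := by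
  intro a b hab
  refine Finset.sum_le_sum fun j _ => ?_
  refine mul_le_mul_of_nonneg_left ?_ (hD j)
  have hm0 : (0:ℝ) ≤ m := Nat.cast_nonneg m
  exact min_le_min (max_le_max (by nlinarith) le_rfl) le_rfl

lemma pathLen'_zero (D : ℕ → ℝ) (m : ℕ) : pathLen' D m 0 = 0 := by
  refine Finset.sum_eq_zero fun j _ => ?_
  have h : (0:ℝ) * m - j ≤ 0 := by
    have := Nat.cast_nonneg (α := ℝ) j; nlinarith
  rw [max_eq_right h, min_eq_left zero_le_one, mul_zero]

lemma pathLen'_one (D : ℕ → ℝ) (m : ℕ) : pathLen' D m 1 = ∑ j ∈ Finset.range m, D j := by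
  refine Finset.sum_congr rfl fun j hj => ?_
  have hjm : (j : ℝ) + 1 ≤ m := by exact_mod_cast Nat.succ_le_of_lt (Finset.mem_range.mp hj)
  rw [max_eq_left (by linarith), min_eq_right (by linarith), mul_one]

lemma pathLen'_formula (D : ℕ → ℝ) (m k : ℕ) (τ : ℝ) (hk1 : k + 1 ≤ m)
    (h0 : (k:ℝ) ≤ τ * m) (h1 : τ * m ≤ (k:ℝ) + 1) :
    pathLen' D m τ = (∑ j ∈ Finset.range k, D j) + (τ * m - k) * D k := by
  have hz : ∀ j ∈ Finset.range m, j ∉ Finset.range (k+1) →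
      D j * min (max (τ * m - j) 0) 1 = 0 := by
    intro j _ hjk
    have hj : k + 1 ≤ j := by
      by_contra h; exact hjk (Finset.mem_range.mpr (by omega))
    have hj' : (k:ℝ) + 1 ≤ j := by exact_mod_cast hj
    rw [max_eq_right (by linarith), min_eq_left zero_le_one, mul_zero]
  unfold pathLen'
  rw [← Finset.sum_subset (Finset.range_subset_range.mpr hk1) hz, Finset.sum_range_succ]
  congr 1
  · refine Finset.sum_congr rfl fun j hj => ?_
    have hjk : (j:ℝ) + 1 ≤ k := by exact_mod_cast Finset.mem_range.mp hj
    rw [max_eq_left (by linarith), min_eq_right (by linarith), mul_one]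
  · rw [max_eq_left (by linarith), min_eq_left (by linarith)]
    ring

/-- The uniform piecewise-linear parametrization of the polygonal path `p`:
on `[k/m, (k+1)/m]` it interpolates linearly from `p k` to `p (k+1)`. -/
noncomputable def polyParam {E : Type*} [NormedAddCommGroup E] [NormedSpace ℝ E]
    {m : ℕ} (p : Fin (m + 1) → E) (τ : ℝ) : E :=
  let k : ℕ := min ⌊τ * m⌋₊ (m - 1)
  p ⟨min k m, Nat.lt_succ_of_le (min_le_right _ _)⟩ +
    (τ * m - (k : ℝ)) •
      (p ⟨min (k + 1) m, Nat.lt_succ_of_le (min_le_right _ _)⟩ -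
        p ⟨min k m, Nat.lt_succ_of_le (min_le_right _ _)⟩)

/-- The polygonal path `p` admits a Fréchet matching to the segment from `u` to `v`
within `ε`: there are continuous monotone reparametrizations `φ, ψ` of `[0,1]`, fixing the
endpoints, such that at every time `τ` the point `γ_p (φ τ)` of the path and the point
`u + ψ τ • (v − u)` of the segment are at distance at most `ε`. -/
def FrechetMatchingWithin {E : Type*} [NormedAddCommGroup E] [NormedSpace ℝ E]
    {m : ℕ} (p : Fin (m + 1) → E) (u v : E) (ε : ℝ) : Prop :=
  ∃ φ ψ : ℝ → ℝ,
    ContinuousOn φ (Set.Icc 0 1) ∧ ContinuousOn ψ (Set.Icc 0 1) ∧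
    MonotoneOn φ (Set.Icc 0 1) ∧ MonotoneOn ψ (Set.Icc 0 1) ∧
    Set.MapsTo φ (Set.Icc 0 1) (Set.Icc 0 1) ∧ Set.MapsTo ψ (Set.Icc 0 1) (Set.Icc 0 1) ∧
    φ 0 = 0 ∧ ψ 0 = 0 ∧ φ 1 = 1 ∧ ψ 1 = 1 ∧
    ∀ τ ∈ Set.Icc (0 : ℝ) 1, dist (polyParam p (φ τ)) (u + ψ τ • (v - u)) ≤ ε

/-- Every `t`-path is a `(t/2)`-Fréchet-path. -/
theorem tpath_is_half_t_frechet_path (t : ℝ) (ht : 1 ≤ t)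
    (u v : EuclideanSpace ℝ (Fin 2)) (m : ℕ) (hm : 1 ≤ m)
    (p : Fin (m + 1) → EuclideanSpace ℝ (Fin 2))
    (hpu : p 0 = u) (hpv : p (Fin.last m) = v)
    (hlen : ∑ k : Fin m, dist (p k.castSucc) (p k.succ) ≤ t * dist u v) :
    FrechetMatchingWithin p u v (t / 2 * dist u v) := by
  classical
  set f : ℕ → EuclideanSpace ℝ (Fin 2) :=
    fun j => p ⟨min j m, Nat.lt_succ_of_le (min_le_right _ _)⟩ with hf
  have hfval : ∀ (j : ℕ) (h : j ≤ m), f j = p ⟨j, Nat.lt_succ_of_le h⟩ := by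
    intro j h
    show p _ = p _
    refine congrArg p ?_
    apply Fin.ext
    show min j m = j
    omega
  have hf0 : f 0 = u := by
    rw [hfval 0 (Nat.zero_le m), ← hpu]
    congr 1
  have hfm : f m = v := by
    rw [hfval m le_rfl, ← hpv]
    congr 1
  set L : ℝ := ∑ j ∈ Finset.range m, dist (f j) (f (j + 1)) with hL
  have hDnn : ∀ j, 0 ≤ dist (f j) (f (j + 1)) := fun j => dist_nonneg
  have hLlen : L = ∑ k : Fin m, dist (p k.castSucc) (p k.succ) := by
    rw [hL, ← Fin.sum_univ_eq_sum_range (fun j => dist (f j) (f (j + 1))) m]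
    refine Finset.sum_congr rfl fun k _ => ?_
    have h1 : f (k : ℕ) = p k.castSucc := by
      rw [hfval k k.isLt.le]; congr 1
    have h2 : f ((k : ℕ) + 1) = p k.succ := by
      rw [hfval (k + 1) (Nat.succ_le_of_lt k.isLt)]; congr 1
    rw [h1, h2]
  have hLtd : L ≤ t * dist u v := hLlen ▸ hlen
  have hdL : dist u v ≤ L := by
    rw [← hf0, ← hfm]; exact dist_le_range_sum_dist f m
  by_cases hd : dist u v = 0
  · -- degenerate case: the whole path is a single point
    have hL0 : L = 0 := le_antisymm (by rw [hd] at hLtd; linarith)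
      (Finset.sum_nonneg fun j _ => hDnn j)
    have hDj : ∀ j ∈ Finset.range m, dist (f j) (f (j + 1)) = 0 := by
      rw [hL] at hL0
      exact fun j hj => (Finset.sum_eq_zero_iff_of_nonneg (fun j _ => hDnn j)).mp hL0 j hj
    have huv : v = u := (dist_eq_zero.mp hd).symm
    have hfj : ∀ j, f j = u := by
      have key : ∀ j, j ≤ m → f j = u := by
        intro j
        induction j with
        | zero => intro _; exact hf0
        | succ n ih =>
          intro h
          have hn : n < m := h
          have hz : dist (f n) (f (n + 1)) = 0 := hDj n (Finset.mem_range.mpr hn)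
          rw [← (dist_eq_zero.mp hz), ih (le_of_lt hn)]
      intro j
      rcases le_or_gt j m with h | h
      · exact key j h
      · have : f j = f m := by
          show p _ = p _
          refine congrArg p ?_
          apply Fin.ext
          show min j m = min m m
          omega
        rw [this, hfm, huv]
    have hpoly : ∀ τ : ℝ, polyParam p τ = u := by
      intro τ
      show f (min ⌊τ * m⌋₊ (m - 1)) + (τ * m - (min ⌊τ * m⌋₊ (m - 1) : ℕ)) •
        (f (min ⌊τ * m⌋₊ (m - 1) + 1) - f (min ⌊τ * m⌋₊ (m - 1))) = u
      rw [hfj, hfj, sub_self, smul_zero, add_zero]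
    refine ⟨id, id, continuous_id.continuousOn, continuous_id.continuousOn,
      monotone_id.monotoneOn _, monotone_id.monotoneOn _,
      fun x hx => hx, fun x hx => hx, rfl, rfl, rfl, rfl, fun τ hτ => ?_⟩
    simp only [id_eq, hpoly, huv, sub_self, smul_zero, add_zero, dist_self]
    have h0t : 0 ≤ t := by linarith
    positivity
  · -- main case
    have hd' : 0 < dist u v := lt_of_le_of_ne dist_nonneg (Ne.symm hd)
    have hLpos : 0 < L := lt_of_lt_of_le hd' hdL
    set D : ℕ → ℝ := fun j => dist (f j) (f (j + 1)) with hDdef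
    refine ⟨id, fun τ => pathLen' D m τ / L, continuous_id.continuousOn,
      ((pathLen'_continuous D m).div_const L).continuousOn,
      monotone_id.monotoneOn _,
      ((pathLen'_mono D m hDnn).div_const hLpos.le).monotoneOn _,
      fun x hx => hx, ?_, rfl, ?_, rfl, ?_, ?_⟩
    · -- MapsTo ψ
      intro x hx
      constructor
      · have h0 : pathLen' D m 0 ≤ pathLen' D m x := pathLen'_mono D m hDnn hx.1
        rw [pathLen'_zero] at h0
        exact div_nonneg h0 hLpos.le
      · have h1 : pathLen' D m x ≤ pathLen' D m 1 := pathLen'_mono D m hDnn hx.2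
        rw [pathLen'_one, ← hL] at h1
        rw [div_le_one hLpos]
        exact h1
    · show pathLen' D m 0 / L = 0
      rw [pathLen'_zero, zero_div]
    · show pathLen' D m 1 / L = 1
      rw [pathLen'_one, ← hL, div_self hLpos.ne']
    · intro τ hτ
      obtain ⟨hτ0, hτ1⟩ := hτ
      simp only [id_eq]
      set k : ℕ := min ⌊τ * m⌋₊ (m - 1) with hk
      have hkm1 : k ≤ m - 1 := min_le_right _ _
      have hkm : k < m := by omega
      have hk1m : k + 1 ≤ m := hkm
      have hτm0 : (0:ℝ) ≤ τ * m := by positivity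
      have hθ0 : (k : ℝ) ≤ τ * m := by
        have h1 : k ≤ ⌊τ * m⌋₊ := by rw [hk]; exact min_le_left _ _
        have h2 : (⌊τ * m⌋₊ : ℝ) ≤ τ * m := Nat.floor_le hτm0
        have h3 : (k : ℝ) ≤ (⌊τ * m⌋₊ : ℝ) := by exact_mod_cast h1
        linarith
      have hθ1 : τ * m ≤ (k : ℝ) + 1 := by
        rcases le_or_gt ⌊τ * m⌋₊ (m - 1) with h | h
        · have hkeq : k = ⌊τ * m⌋₊ := by rw [hk]; exact min_eq_left h
          have h2 := Nat.lt_floor_add_one (τ * m)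
          rw [hkeq]; push_cast at h2 ⊢; linarith
        · have hkeq : k = m - 1 := by rw [hk]; exact min_eq_right h.le
          have h2 : τ * m ≤ m := by
            have : (0:ℝ) ≤ m := Nat.cast_nonneg m
            nlinarith
          have h3 : (k : ℝ) + 1 = m := by
            rw [hkeq, Nat.cast_sub hm]; push_cast; ring
          linarith
      have hx : polyParam p τ = f k + (τ * m - (k:ℝ)) • (f (k + 1) - f k) := rfl
      have d1 : dist (polyParam p τ) (f k) = (τ * m - (k:ℝ)) * dist (f k) (f (k + 1)) := by
        rw [hx]; exact dist_interp_left' _ _ (by linarith)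
      have d2 : dist (polyParam p τ) (f (k + 1))
          = (1 - (τ * m - (k:ℝ))) * dist (f k) (f (k + 1)) := by
        rw [hx]; exact dist_interp_right' _ _ (by linarith)
      have hform := pathLen'_formula D m k τ hk1m hθ0 hθ1
      have hLsplit : L = (∑ j ∈ Finset.range k, D j)
          + (D k + ∑ j ∈ Finset.Ico (k + 1) m, D j) := by
        rw [hL, Finset.range_eq_Ico,
          ← Finset.sum_Ico_consecutive _ (Nat.zero_le k) hkm.le,
          Finset.sum_eq_sum_Ico_succ_bot hkm, ← Finset.range_eq_Ico]
      have ha : dist (polyParam p τ) u ≤ pathLen' D m τ := by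
        have t1 : dist (polyParam p τ) u ≤ dist (polyParam p τ) (f k) + dist (f k) u :=
          dist_triangle _ _ _
        have t2 : dist (f k) u = dist (f 0) (f k) := by rw [hf0, dist_comm]
        have t3 : dist (f 0) (f k) ≤ ∑ j ∈ Finset.range k, dist (f j) (f (j + 1)) :=
          dist_le_range_sum_dist f k
        have e1 : D k = dist (f k) (f (k + 1)) := rfl
        have e2 : ∑ j ∈ Finset.range k, D j
            = ∑ j ∈ Finset.range k, dist (f j) (f (j + 1)) := rfl
        rw [hform, e1, e2]
        linarith [d1]
      have hb : dist (polyParam p τ) v ≤ L - pathLen' D m τ := by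
        have t1 : dist (polyParam p τ) v
            ≤ dist (polyParam p τ) (f (k + 1)) + dist (f (k + 1)) v := dist_triangle _ _ _
        have t2 : dist (f (k + 1)) v = dist (f (k + 1)) (f m) := by rw [hfm]
        have t3 : dist (f (k + 1)) (f m) ≤ ∑ j ∈ Finset.Ico (k + 1) m, dist (f j) (f (j + 1)) :=
          dist_le_Ico_sum_dist f hk1m
        have e1 : ∑ j ∈ Finset.Ico (k + 1) m, D j
            = ∑ j ∈ Finset.Ico (k + 1) m, dist (f j) (f (j + 1)) := rfl
        have e2 : D k = dist (f k) (f (k + 1)) := rfl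
        rw [hLsplit, hform, e1, e2]
        linarith [d2]
      -- apply the abstract bound
      set S : ℝ := pathLen' D m τ with hS
      have hS0 : 0 ≤ S := by
        have h0 : pathLen' D m 0 ≤ pathLen' D m τ := pathLen'_mono D m hDnn hτ0
        rw [pathLen'_zero] at h0; exact h0
      have hSL : S ≤ L := by
        have h1 : pathLen' D m τ ≤ pathLen' D m 1 := pathLen'_mono D m hDnn hτ1
        rw [pathLen'_one, ← hL] at h1; exact h1
      have hσ0 : 0 ≤ S / L := div_nonneg hS0 hLpos.le
      have hσ1 : S / L ≤ 1 := (div_le_one hLpos).mpr hSL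
      have hcancel : S / L * L = S := div_mul_cancel₀ S hLpos.ne'
      refine tail_bound' t (S / L) L ht (polyParam p τ) u v hdL hLtd hσ0 hσ1 ?_ ?_
      · rw [hcancel]; exact ha
      · rw [sub_mul, one_mul, hcancel]; exact hb
end

section
/- Let t ≥ 1, let S be a finite set of points in EuclideanSpace ℝ (Fin 2) and let E ⊆ S × S be a symmetric edge set such that the graph (S, E) is a t-spanner. Then for all u, v ∈ S there exists m ≥ 1 and a graph path p : Fin (m+1) → S from u to v (with (p k, p (k+1)) ∈ E for all k < m) that admits a Fréchet matching to the segment from u to v within (t/2) · dist u v; that is, (S, E) is a (t/2)-Fréchet-spanner. -/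
section Helpers
variable {F : Type*} [NormedAddCommGroup F] [NormedSpace ℝ F]

lemma polyParam_apply {m k : ℕ} (p : Fin (m + 1) → F) (τ : ℝ)
    (hk : min ⌊τ * m⌋₊ (m - 1) = k) (hkm : k < m) :
    polyParam p τ = p ⟨k, by omega⟩ + (τ * m - k) • (p ⟨k + 1, by omega⟩ - p ⟨k, by omega⟩) := by
  simp only [polyParam, hk, min_eq_left hkm.le, min_eq_left (show k + 1 ≤ m by omega)]

lemma cell_lt {m : ℕ} (hm : 1 ≤ m) (τ : ℝ) : min ⌊τ * m⌋₊ (m - 1) < m := by omega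

lemma cell_bounds {m : ℕ} (hm : 1 ≤ m) {τ : ℝ} (h0 : 0 ≤ τ) (h1 : τ ≤ 1) :
    0 ≤ τ * m - (min ⌊τ * m⌋₊ (m - 1) : ℕ) ∧ τ * m - (min ⌊τ * m⌋₊ (m - 1) : ℕ) ≤ 1 := by
  have hτm : 0 ≤ τ * m := by positivity
  constructor
  · have h := Nat.floor_le hτm
    have : ((min ⌊τ * m⌋₊ (m - 1) : ℕ) : ℝ) ≤ (⌊τ * m⌋₊ : ℝ) := by
      exact_mod_cast Nat.cast_le.mpr (min_le_left _ _)
    linarith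
  · rcases le_or_gt ⌊τ * m⌋₊ (m - 1) with h | h
    · rw [min_eq_left h]
      have := Nat.lt_floor_add_one (τ * m)
      linarith
    · rw [min_eq_right h.le]
      have hm' : ((m - 1 : ℕ) : ℝ) = (m : ℝ) - 1 := by
        rw [Nat.cast_sub hm]; simp
      have : τ * m ≤ m := by
        have : (0:ℝ) ≤ m := by positivity
        nlinarith
      rw [hm']; linarith

lemma polyParam_zero {m : ℕ} (hm : 1 ≤ m) (p : Fin (m + 1) → F) :
    polyParam p 0 = p 0 := by
  have hk : min ⌊(0:ℝ) * m⌋₊ (m - 1) = 0 := by simp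
  rw [polyParam_apply p 0 hk (by omega)]
  norm_num

lemma polyParam_one {m : ℕ} (hm : 1 ≤ m) (p : Fin (m + 1) → F) :
    polyParam p 1 = p (Fin.last m) := by
  have hk : min ⌊(1:ℝ) * m⌋₊ (m - 1) = m - 1 := by
    simp [Nat.floor_natCast]
  rw [polyParam_apply p 1 hk (by omega)]
  have hc : ((m - 1 : ℕ) : ℝ) = (m : ℝ) - 1 := by rw [Nat.cast_sub hm]; simp
  have h1 : (1:ℝ) * m - ((m-1:ℕ):ℝ) = 1 := by rw [hc]; ring
  rw [h1, one_smul]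
  have : (⟨m - 1 + 1, by omega⟩ : Fin (m+1)) = Fin.last m := by
    apply Fin.ext; simp; omega
  rw [this]
  abel

lemma affine_aux (u w : F) (a b lam : ℝ) :
    (u + a • w) + lam • ((u + b • w) - (u + a • w)) = u + (a + lam • (b - a)) • w := by
  simp only [smul_eq_mul]
  module

lemma polyParam_affine {m : ℕ} (u w : F) (c : Fin (m + 1) → ℝ) (τ : ℝ) :
    polyParam (fun k => u + c k • w) τ = u + polyParam c τ • w := by
  simp only [polyParam]
  exact affine_aux u w _ _ _

lemma polyParam_sub {m : ℕ} (f g : Fin (m + 1) → ℝ) (τ : ℝ) :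
    polyParam (fun k => f k - g k) τ = polyParam f τ - polyParam g τ := by
  simp only [polyParam, smul_eq_mul]; ring

lemma polyParam_natval {m : ℕ} (hm : 1 ≤ m) (τ : ℝ) :
    polyParam (fun k : Fin (m + 1) => (k.val : ℝ)) τ = τ * m := by
  rw [polyParam_apply _ τ rfl (cell_lt hm τ)]
  simp only [Fin.val_mk, smul_eq_mul]
  push_cast [Nat.cast_min]
  ring

lemma polyParam_mem {m : ℕ} (hm : 1 ≤ m) (b : ℕ → ℝ) {τ : ℝ} (h0 : 0 ≤ τ) (h1 : τ ≤ 1) :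
    ∃ k : ℕ, min ⌊τ * m⌋₊ (m - 1) = k ∧ k < m ∧
      polyParam (fun k : Fin (m + 1) => b k.val) τ
        = b k + (τ * m - k) • (b (k + 1) - b k) ∧
      0 ≤ τ * m - (k : ℝ) ∧ τ * m - (k : ℝ) ≤ 1 := by
  refine ⟨min ⌊τ * m⌋₊ (m - 1), rfl, cell_lt hm τ, ?_, cell_bounds hm h0 h1⟩
  rw [polyParam_apply _ τ rfl (cell_lt hm τ)]

lemma polyParam_monotoneOn {m : ℕ} (hm : 1 ≤ m) (b : ℕ → ℝ) (hb : Monotone b) :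
    MonotoneOn (polyParam (fun k : Fin (m + 1) => b k.val)) (Set.Icc 0 1) := by
  intro σ hσ τ hτ hστ
  obtain ⟨i, hidef, him, hieq, hi0, hi1⟩ := polyParam_mem hm b hσ.1 hσ.2
  obtain ⟨j, hjdef, hjm, hjeq, hj0, hj1⟩ := polyParam_mem hm b hτ.1 hτ.2
  rw [hieq, hjeq]
  have hij : i ≤ j := by
    have := Nat.floor_le_floor (mul_le_mul_of_nonneg_right hστ (by positivity : (0:ℝ) ≤ m))
    omega
  have hΔi : 0 ≤ b (i + 1) - b i := by have := hb (Nat.le_succ i); linarith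
  have hΔj : 0 ≤ b (j + 1) - b j := by have := hb (Nat.le_succ j); linarith
  rcases eq_or_lt_of_le hij with rfl | hlt
  · have : σ * m ≤ τ * m := mul_le_mul_of_nonneg_right hστ (by positivity)
    simp only [smul_eq_mul]
    nlinarith
  · have h1 : b i + (σ * m - i) • (b (i + 1) - b i) ≤ b (i + 1) := by
      simp only [smul_eq_mul]; nlinarith
    have h2 : b (i + 1) ≤ b j := hb hlt
    have h3 : b j ≤ b j + (τ * m - j) • (b (j + 1) - b j) := by
      simp only [smul_eq_mul]; nlinarith
    linarith

lemma polyParam_lipschitz {m : ℕ} (hm : 1 ≤ m) (b : ℕ → ℝ) (hb : Monotone b)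
    (hb1 : ∀ j, b j ≤ 1) (hb0 : b 0 = 0) :
    ContinuousOn (polyParam (fun k : Fin (m + 1) => b k.val)) (Set.Icc 0 1) := by
  set ψ := polyParam (fun k : Fin (m + 1) => b k.val) with hψ
  have hmono := polyParam_monotoneOn hm b hb
  have hb' : Monotone (fun j : ℕ => (j : ℝ) - b j) := by
    intro x y hxy
    rcases eq_or_lt_of_le hxy with rfl | h
    · exact le_rfl
    · have h1 : b y ≤ 1 := hb1 y
      have h2 : 0 ≤ b x := hb0 ▸ hb (Nat.zero_le x)
      have : (x : ℝ) + 1 ≤ (y : ℝ) := by exact_mod_cast Nat.succ_le_of_lt h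
      simp only
      linarith
  have hmono' := polyParam_monotoneOn hm _ hb'
  have e1 : ∀ ρ : ℝ, polyParam (fun k : Fin (m+1) => ((k.val:ℝ) - b k.val)) ρ
      = ρ * m - ψ ρ := by
    intro ρ
    rw [polyParam_sub (fun k : Fin (m+1) => (k.val:ℝ)) (fun k : Fin (m+1) => b k.val) ρ,
      polyParam_natval hm ρ]
  have hkey : ∀ σ ∈ Set.Icc (0:ℝ) 1, ∀ τ ∈ Set.Icc (0:ℝ) 1, σ ≤ τ →
      ψ τ - ψ σ ≤ m * (τ - σ) := by
    intro σ hσ τ hτ hστ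
    have h := hmono' hσ hτ hστ
    rw [e1 σ, e1 τ] at h
    linarith
  have habs : ∀ x ∈ Set.Icc (0:ℝ) 1, ∀ y ∈ Set.Icc (0:ℝ) 1, x ≤ y →
      |ψ x - ψ y| ≤ m * |x - y| := by
    intro x hx y hy h
    rw [abs_sub_comm, abs_of_nonneg (sub_nonneg.mpr (hmono hx hy h)),
      abs_sub_comm, abs_of_nonneg (sub_nonneg.mpr h)]
    exact hkey x hx y hy h
  apply LipschitzOnWith.continuousOn (K := (m : NNReal))
  apply LipschitzOnWith.of_dist_le_mul
  intro x hx y hy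
  rw [Real.dist_eq, Real.dist_eq, NNReal.coe_natCast]
  rcases le_total x y with h | h
  · exact habs x hx y hy h
  · rw [abs_sub_comm, abs_sub_comm x y]
    exact habs y hy x hx h

lemma dist_polyParam_le {m : ℕ} (hm : 1 ≤ m) (p q : Fin (m + 1) → F) {ε : ℝ}
    (h : ∀ k, dist (p k) (q k) ≤ ε) {τ : ℝ} (h0 : 0 ≤ τ) (h1 : τ ≤ 1) :
    dist (polyParam p τ) (polyParam q τ) ≤ ε := by
  have hkm := cell_lt hm τ
  obtain ⟨hl0, hl1⟩ := cell_bounds hm h0 h1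
  rw [polyParam_apply p τ rfl hkm, polyParam_apply q τ rfl hkm]
  set lam := τ * m - ((min ⌊τ * m⌋₊ (m - 1) : ℕ) : ℝ) with hlam
  set a := p ⟨min ⌊τ * m⌋₊ (m-1), by omega⟩
  set b₁ := p ⟨min ⌊τ * m⌋₊ (m-1) + 1, by omega⟩
  set c := q ⟨min ⌊τ * m⌋₊ (m-1), by omega⟩
  set d := q ⟨min ⌊τ * m⌋₊ (m-1) + 1, by omega⟩
  have key : (a + lam • (b₁ - a)) - (c + lam • (d - c))
      = (1 - lam) • (a - c) + lam • (b₁ - d) := by module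
  rw [dist_eq_norm, key]
  calc ‖(1 - lam) • (a - c) + lam • (b₁ - d)‖
      ≤ ‖(1 - lam) • (a - c)‖ + ‖lam • (b₁ - d)‖ := norm_add_le _ _
    _ = (1 - lam) * ‖a - c‖ + lam * ‖b₁ - d‖ := by
        rw [norm_smul, norm_smul, Real.norm_eq_abs, Real.norm_eq_abs,
          abs_of_nonneg (by linarith), abs_of_nonneg hl0]
    _ ≤ (1 - lam) * ε + lam * ε := by
        have h1 := h ⟨min ⌊τ * m⌋₊ (m-1), by omega⟩
        have h2 := h ⟨min ⌊τ * m⌋₊ (m-1) + 1, by omega⟩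
        rw [dist_eq_norm] at h1 h2
        have := mul_le_mul_of_nonneg_left h1 (by linarith : (0:ℝ) ≤ 1 - lam)
        have := mul_le_mul_of_nonneg_left h2 hl0
        nlinarith
    _ = ε := by ring

lemma frechet_of_pointwise {m : ℕ} (hm : 1 ≤ m) (p : Fin (m + 1) → F) (u v : F)
    (b : ℕ → ℝ) (hbmono : Monotone b) (hb0 : b 0 = 0) (hbm : b m = 1) (hb1 : ∀ j, b j ≤ 1)
    {ε : ℝ} (hd : ∀ k : Fin (m + 1), dist (p k) (u + b k.val • (v - u)) ≤ ε) :
    ∃ φ ψ : ℝ → ℝ,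
      ContinuousOn φ (Set.Icc 0 1) ∧ ContinuousOn ψ (Set.Icc 0 1) ∧
      MonotoneOn φ (Set.Icc 0 1) ∧ MonotoneOn ψ (Set.Icc 0 1) ∧
      Set.MapsTo φ (Set.Icc 0 1) (Set.Icc 0 1) ∧ Set.MapsTo ψ (Set.Icc 0 1) (Set.Icc 0 1) ∧
      φ 0 = 0 ∧ ψ 0 = 0 ∧ φ 1 = 1 ∧ ψ 1 = 1 ∧
      ∀ τ ∈ Set.Icc (0 : ℝ) 1, dist (polyParam p (φ τ)) (u + ψ τ • (v - u)) ≤ ε := by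
  set bF : Fin (m + 1) → ℝ := fun k => b k.val with hbF
  set ψ : ℝ → ℝ := polyParam bF with hψ
  have hbnn : ∀ j, 0 ≤ b j := fun j => hb0 ▸ hbmono (Nat.zero_le j)
  refine ⟨id, ψ, continuousOn_id, polyParam_lipschitz hm b hbmono hb1 hb0,
    monotoneOn_id, polyParam_monotoneOn hm b hbmono, Set.mapsTo_id _, ?_, rfl, ?_, rfl, ?_, ?_⟩
  · -- MapsTo ψ
    intro τ hτ
    obtain ⟨k, hkdef, hkm, hkeq, hl0, hl1⟩ := polyParam_mem hm b hτ.1 hτ.2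
    rw [hψ, hbF] at *
    rw [hkeq]
    have hΔ : 0 ≤ b (k + 1) - b k := by have := hbmono (Nat.le_succ k); linarith
    constructor
    · have := hbnn k
      simp only [smul_eq_mul]; nlinarith
    · have := hb1 (k + 1)
      simp only [smul_eq_mul]; nlinarith
  · -- ψ 0 = 0
    rw [hψ, polyParam_zero hm bF, hbF]
    simpa using hb0
  · -- ψ 1 = 1
    rw [hψ, polyParam_one hm bF, hbF]
    simpa using hbm
  · -- main inequality
    intro τ hτ
    have : u + ψ τ • (v - u) = polyParam (fun k => u + bF k • (v - u)) τ := by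
      rw [polyParam_affine u (v - u) bF τ]
    rw [this]
    exact dist_polyParam_le hm p _ hd hτ.1 hτ.2

end Helpers

open scoped RealInnerProductSpace

lemma norm_sub_smul_le {G : Type*} [NormedAddCommGroup G] [InnerProductSpace ℝ G]
    (e x : G) (he : ‖e‖ = 1) {a c : ℝ} (h : |⟪x, e⟫ - a| ≤ |⟪x, e⟫ - c|) :
    ‖x - a • e‖ ≤ ‖x - c • e‖ := by
  have hsq : ∀ r : ℝ, ‖x - r • e‖ ^ 2 = ‖x‖ ^ 2 - 2 * r * ⟪x, e⟫ + r ^ 2 := by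
    intro r
    rw [norm_sub_sq_real, real_inner_smul_right, norm_smul, Real.norm_eq_abs, he]
    rw [mul_pow, sq_abs]
    ring
  have h2 : (⟪x, e⟫ - a) ^ 2 ≤ (⟪x, e⟫ - c) ^ 2 := by
    have := mul_self_le_mul_self (abs_nonneg (⟪x, e⟫ - a)) h
    rw [abs_mul_abs_self, abs_mul_abs_self] at this
    nlinarith [this]
  have h3 : ‖x - a • e‖ ^ 2 ≤ ‖x - c • e‖ ^ 2 := by
    rw [hsq a, hsq c]; nlinarith
  have := Real.sqrt_le_sqrt h3
  rwa [Real.sqrt_sq (norm_nonneg _), Real.sqrt_sq (norm_nonneg _)] at this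

/-- Any `t`-spanner of a planar point set is a `(t/2)`-Fréchet-spanner. -/
theorem tspanner_is_half_t_frechet_spanner (t : ℝ) (ht : 1 ≤ t)
    (S : Finset (EuclideanSpace ℝ (Fin 2)))
    (E : Set (EuclideanSpace ℝ (Fin 2) × EuclideanSpace ℝ (Fin 2)))
    (hES : ∀ e ∈ E, e.1 ∈ S ∧ e.2 ∈ S)
    (hsymm : ∀ a b, (a, b) ∈ E → (b, a) ∈ E)
    (hspan : ∀ u ∈ S, ∀ v ∈ S, ∃ m : ℕ, 1 ≤ m ∧
      ∃ p : Fin (m + 1) → EuclideanSpace ℝ (Fin 2),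
        p 0 = u ∧ p (Fin.last m) = v ∧
        (∀ k : Fin m, (p k.castSucc, p k.succ) ∈ E) ∧
        ∑ k : Fin m, dist (p k.castSucc) (p k.succ) ≤ t * dist u v) :
    ∀ u ∈ S, ∀ v ∈ S, ∃ m : ℕ, 1 ≤ m ∧
      ∃ p : Fin (m + 1) → EuclideanSpace ℝ (Fin 2),
        p 0 = u ∧ p (Fin.last m) = v ∧
        (∀ k : Fin m, (p k.castSucc, p k.succ) ∈ E) ∧
        FrechetMatchingWithin p u v (t / 2 * dist u v) := by
  intro u hu v hv
  obtain ⟨m, hm, p, hp0, hpl, hpe, hplen⟩ := hspan u hu v hv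
  refine ⟨m, hm, p, hp0, hpl, hpe, ?_⟩
  set d : ℝ := dist u v with hd
  have hd0 : 0 ≤ d := dist_nonneg
  -- the polyline in ℕ-indexed form
  set P : ℕ → EuclideanSpace ℝ (Fin 2) :=
    fun j => p ⟨min j m, Nat.lt_succ_of_le (min_le_right _ _)⟩ with hP
  have hPlt : ∀ j : ℕ, (hj : j ≤ m) → P j = p ⟨j, by omega⟩ := by
    intro j hj
    simp only [hP]
    simp only [min_eq_left hj]
  have hPval : ∀ k : Fin (m + 1), P k.val = p k := by
    intro k
    rw [hPlt k.val (by omega)]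
  have hP0 : P 0 = u := by
    rw [← hp0]; exact hPval 0
  have hPm : P m = v := by
    rw [← hpl]; exact hPval (Fin.last m)
  set D : ℕ → ℝ := fun j => dist (P j) (P (j + 1)) with hD
  set s : ℕ → ℝ := fun n => ∑ j ∈ Finset.range n, D j with hs
  have hterm : ∀ k : Fin m, dist (p k.castSucc) (p k.succ) = D k.val := by
    intro k
    simp only [hD]
    rw [hPlt k.val (by omega), hPlt (k.val + 1) (by omega)]
    rfl
  have hsum : s m = ∑ k : Fin m, dist (p k.castSucc) (p k.succ) := by
    simp only [hterm]
    exact (Fin.sum_univ_eq_sum_range D m).symm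
  have hDnn : ∀ j, 0 ≤ D j := fun j => dist_nonneg
  have hsnn : ∀ n, 0 ≤ s n := fun n => Finset.sum_nonneg fun j _ => hDnn j
  have htel : ∀ i k : ℕ, i ≤ k → dist (P i) (P k) ≤ s k - s i := by
    intro i k hik
    have h1 := dist_le_range_sum_dist (fun n => P (i + n)) (k - i)
    have e0 : i + (k - i) = k := by omega
    rw [e0] at h1
    have e1 : ∑ n ∈ Finset.range (k - i), dist (P (i + n)) (P (i + (n + 1)))
        = ∑ j ∈ Finset.range k, D j - ∑ j ∈ Finset.range i, D j := by
      rw [← Finset.sum_Ico_eq_sub _ hik, Finset.sum_Ico_eq_sum_range]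
      exact Finset.sum_congr rfl fun n _ => by simp only [hD, Nat.add_assoc]
    rw [e1] at h1
    exact h1
  have hL : s m ≤ t * d := by rw [hsum]; exact hplen
  have hsmono : ∀ i k : ℕ, i ≤ k → s i ≤ s k := by
    intro i k hik
    exact Finset.sum_le_sum_of_subset_of_nonneg (Finset.range_subset_range.mpr hik)
      (fun j _ _ => hDnn j)
  have hs0 : s 0 = 0 := by simp [hs]
  have hdist0 : ∀ j : ℕ, dist u (P j) ≤ s j := by
    intro j
    have := htel 0 j (Nat.zero_le j)
    rw [hP0, hs0] at this
    linarith
  have hdistm : ∀ j : ℕ, j ≤ m → dist (P j) v ≤ s m - s j := by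
    intro j hj
    have := htel j m hj
    rwa [hPm] at this
  have hfp : ∀ b : ℕ → ℝ, Monotone b → b 0 = 0 → b m = 1 → (∀ j, b j ≤ 1) →
      (∀ k : Fin (m + 1), dist (p k) (u + b k.val • (v - u)) ≤ t / 2 * d) →
      FrechetMatchingWithin p u v (t / 2 * dist u v) := by
    intro b h1 h2 h3 h4 h5
    exact frechet_of_pointwise hm p u v b h1 h2 h3 h4 h5
  rcases eq_or_lt_of_le hd0 with hdeq | hdpos
  · -- degenerate case : u = v
    have hduv0 : dist u v = 0 := by rw [← hd]; exact hdeq.symm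
    have huv : u = v := dist_eq_zero.mp hduv0
    have hsm0 : s m = 0 := le_antisymm (by rw [← hdeq] at hL; linarith) (hsnn m)
    have hpk : ∀ k : Fin (m + 1), p k = u := by
      intro k
      rw [← hPval k]
      have h1 := hdist0 k.val
      have h2 := hsmono k.val m (by omega)
      have : dist u (P k.val) = 0 := le_antisymm (by linarith [hsm0]) dist_nonneg
      exact (dist_eq_zero.mp this).symm
    apply hfp (fun j => min (j : ℝ) 1)
    · exact Monotone.min (fun a b' hab => Nat.cast_le.mpr hab) monotone_const
    · norm_num
    · exact min_eq_right (by exact_mod_cast hm)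
    · exact fun j => min_le_right _ _
    · intro k
      rw [hpk k, ← huv, sub_self, smul_zero, add_zero, dist_self]
      positivity
  · -- main case : d > 0
    set w : EuclideanSpace ℝ (Fin 2) := v - u with hw
    have hwn : ‖w‖ = d := by rw [hw, hd, dist_eq_norm]; exact norm_sub_rev v u
    set e : EuclideanSpace ℝ (Fin 2) := d⁻¹ • w with he
    have hen : ‖e‖ = 1 := by
      rw [he, norm_smul, Real.norm_eq_abs, abs_of_pos (inv_pos.mpr hdpos), hwn]
      field_simp
    have hde : d • e = w := by
      rw [he, smul_smul, mul_inv_cancel₀ hdpos.ne', one_smul]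
    set f : ℕ → ℝ := fun j => ⟪P j - u, e⟫ with hf
    set c : ℕ → ℝ := fun j => max 0 (min (f j) d) with hc
    have hcnn : ∀ j, 0 ≤ c j := fun j => le_max_left _ _
    have hcd : ∀ j, c j ≤ d := fun j => max_le hd0 (min_le_right _ _)
    set M : ℕ → ℝ := fun k => (Finset.range (k + 1)).sup' (by simp) c with hM
    have hMmono : Monotone M := by
      intro i k hik
      exact Finset.sup'_mono c (by intro x hx; simp at hx ⊢; omega) (by simp)
    have hMle : ∀ k, M k ≤ d := by
      intro k
      exact Finset.sup'_le _ _ fun i _ => hcd i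
    have hcleM : ∀ i k, i ≤ k → c i ≤ M k := by
      intro i k hik
      exact Finset.le_sup' c (by simp; omega)
    have hf0 : f 0 = 0 := by rw [hf]; simp [hP0]
    have hfm : f m = d := by
      rw [hf]
      simp only [hPm, he]
      rw [real_inner_smul_right, ← hw, real_inner_self_eq_norm_sq, hwn]
      field_simp
    have hM0 : M 0 = 0 := by
      rw [hM]
      simp only [Finset.range_one, Finset.sup'_singleton]
      rw [hc]
      simp [hf0, min_eq_left hd0, hdpos.le]
    have hMd : M m = d := by
      refine le_antisymm (hMle m) ?_
      have h1 := hcleM m m le_rfl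
      have h2 : c m = d := by
        rw [hc]
        simp only
        rw [hfm, min_self, max_eq_right hd0]
      linarith
    apply hfp (fun j => M (min j m) / d)
    · intro i j hij
      have h := hMmono (min_le_min hij (le_refl m))
      exact (div_le_div_iff_of_pos_right hdpos).mpr h
    · simp [hM0]
    · simp only [min_self]
      rw [hMd]
      exact div_self hdpos.ne'
    · intro j
      rw [div_le_one hdpos]
      exact hMle _
    · intro k
      have hjm : (k : ℕ) ≤ m := by omega
      rw [← hPval k]
      have hbj : (M (min k.val m) / d) • (v - u) = M k.val • e := by
        rw [min_eq_left hjm, he, smul_smul, div_eq_mul_inv, ← hw]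
      rw [hbj]
      set j := k.val with hj
      -- pointwise clamp is closer than each endpoint of the segment
      have habs1 : ∀ i, |f i - c i| ≤ |f i - 0| := by
        intro i
        rw [sub_zero]
        rcases le_total (f i) 0 with h | h
        · have hci : c i = 0 := by
            rw [hc]; simp only
            rw [max_eq_left (le_trans (min_le_left _ _) h)]
          rw [hci, sub_zero]
        · have h1 : 0 ≤ c i := hcnn i
          have h2 : c i ≤ f i := by
            rw [hc]; simp only
            exact max_le h (min_le_left _ _)
          rw [abs_of_nonneg (by linarith), abs_of_nonneg h]
          linarith
      have habs2 : |f j - M j| ≤ |f j - d| := by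
        rcases le_total (f j) d with h | h
        · have h1 : f j ≤ c j := by
            rw [hc]; simp only
            rw [min_eq_left h]
            exact le_max_right _ _
          have h2 := hcleM j j le_rfl
          have h3 := hMle j
          rw [abs_of_nonpos (by linarith), abs_of_nonpos (by linarith)]
          linarith
        · have h1 : c j = d := by
            rw [hc]; simp only
            rw [min_eq_right h, max_eq_right hd0]
          have h2 := hcleM j j le_rfl
          have h3 := hMle j
          have h4 : M j = d := by linarith [h1 ▸ h2]
          rw [h4]
      -- Claim A : within s j of the start
      obtain ⟨i, hi_mem, hMi⟩ := Finset.exists_mem_eq_sup'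
        (by simp : (Finset.range (j + 1)).Nonempty) c
      have hij : i ≤ j := by
        simp only [Finset.mem_range] at hi_mem
        omega
      have hA1 : dist (P i) (u + c i • e) ≤ dist (P i) u := by
        rw [dist_eq_norm, dist_eq_norm]
        have h0 : P i - (u + c i • e) = (P i - u) - c i • e := by abel
        rw [h0]
        have := norm_sub_smul_le e (P i - u) hen (habs1 i)
        rwa [zero_smul, sub_zero] at this
      have hA : dist (P j) (u + M j • e) ≤ s j := by
        calc dist (P j) (u + M j • e)
            ≤ dist (P j) (P i) + dist (P i) (u + M j • e) := dist_triangle _ _ _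
          _ = dist (P j) (P i) + dist (P i) (u + c i • e) := by
              have hMj : M j = c i := by simp only [hM]; exact hMi
              rw [hMj]
          _ ≤ (s j - s i) + dist (P i) u := by
              have := htel i j hij
              rw [dist_comm (P j) (P i)]
              linarith [hA1]
          _ ≤ (s j - s i) + s i := by
              have := hdist0 i
              rw [dist_comm] at this
              linarith
          _ = s j := by ring
      -- Claim B : within s m - s j of the end
      have hB : dist (P j) (u + M j • e) ≤ s m - s j := by
        have hB1 : dist (P j) (u + M j • e) ≤ dist (P j) (u + d • e) := by
          rw [dist_eq_norm, dist_eq_norm]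
          have h0 : ∀ r : ℝ, P j - (u + r • e) = (P j - u) - r • e := fun r => by abel
          rw [h0, h0]
          exact norm_sub_smul_le e (P j - u) hen habs2
        have h1 : u + d • e = v := by
          rw [hde, hw]
          abel
        rw [h1] at hB1
        exact hB1.trans (hdistm j hjm)
      linarith
end

section
/- Let t ≥ 1, let u, v ∈ EuclideanSpace ℝ (Fin 2), let m ≥ 1 and let p : Fin (m+1) → EuclideanSpace ℝ (Fin 2) be a polygonal path with p 0 = u, p m = v and total length ∑_{k<m} dist (p k) (p (k+1)) ≤ t · dist u v. Then p admits a Fréchet matching to the segment from u to v within (Real.sqrt (t^2 − t) / Real.sqrt 2) · dist u v. -/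
theorem frechet_of_discrete {E : Type*} [NormedAddCommGroup E] [NormedSpace ℝ E]
    {m : ℕ} (hm : 1 ≤ m) (p : Fin (m + 1) → E) (u v : E) (ε : ℝ) (s : ℕ → ℝ)
    (hmono : Monotone s) (hs0 : s 0 = 0) (hsm : s m = 1)
    (hclose : ∀ k : ℕ, (hk : k ≤ m) →
      dist (p ⟨k, Nat.lt_succ_of_le hk⟩) (u + s k • (v - u)) ≤ ε) :
    FrechetMatchingWithin p u v ε := by
  set ψ : ℝ → ℝ := fun τ => ∑ j ∈ Finset.range m,
    (s (j + 1) - s j) * (min (max (τ * m - j) 0) 1) with hψ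
  have hψcont : Continuous ψ := by
    apply continuous_finset_sum
    intro j _
    exact continuous_const.mul ((((continuous_id.mul continuous_const).sub
      continuous_const).max continuous_const).min continuous_const)
  have hψmono : Monotone ψ := by
    intro a b hab
    apply Finset.sum_le_sum
    intro j _
    have h1 : (0:ℝ) ≤ s (j+1) - s j := sub_nonneg.2 (hmono (Nat.le_succ j))
    have h2 : min (max (a * m - j) 0) 1 ≤ min (max (b * m - j) 0) 1 :=
      min_le_min (max_le_max (sub_le_sub_right
        (mul_le_mul_of_nonneg_right hab (Nat.cast_nonneg m)) _) le_rfl) le_rfl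
    exact mul_le_mul_of_nonneg_left h2 h1
  have hψ0 : ψ 0 = 0 := by
    simp only [hψ]
    apply Finset.sum_eq_zero
    intro j _
    have : max ((0:ℝ) * m - j) 0 = 0 := max_eq_right (by simp [Nat.cast_nonneg])
    rw [this]
    simp
  have hψ1 : ψ 1 = 1 := by
    simp only [hψ]
    have h : ∀ j ∈ Finset.range m, (s (j + 1) - s j) * (min (max ((1:ℝ) * m - j) 0) 1)
        = s (j+1) - s j := by
      intro j hj
      have hj' : (j:ℝ) + 1 ≤ m := by
        exact_mod_cast Nat.succ_le_of_lt (Finset.mem_range.1 hj)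
      have h1 : (1:ℝ) ≤ 1 * m - j := by linarith
      rw [max_eq_left (by linarith), min_eq_right h1, mul_one]
    rw [Finset.sum_congr rfl h, Finset.sum_range_sub, hsm, hs0, sub_zero]
  -- key evaluation lemma
  have key : ∀ τ ∈ Set.Icc (0:ℝ) 1,
      dist (polyParam p τ) (u + ψ τ • (v - u)) ≤ ε := by
    intro τ hτ
    obtain ⟨hτ0, hτ1⟩ := hτ
    set K : ℕ := min ⌊τ * m⌋₊ (m - 1) with hK
    set θ : ℝ := τ * m - K with hθ
    have hKm : K < m := lt_of_le_of_lt (min_le_right _ _) (Nat.sub_lt hm one_pos)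
    have hτm0 : (0:ℝ) ≤ τ * m := mul_nonneg hτ0 (Nat.cast_nonneg m)
    have hθ0 : 0 ≤ θ := by
      have h1 : (K:ℝ) ≤ ⌊τ * m⌋₊ := by exact_mod_cast min_le_left _ _
      have h2 : (⌊τ * m⌋₊ : ℝ) ≤ τ * m := Nat.floor_le hτm0
      simp only [hθ]; linarith
    have hθ1 : θ ≤ 1 := by
      rcases lt_or_ge ⌊τ * m⌋₊ m with h | h
      · have hKe : K = ⌊τ * m⌋₊ := min_eq_left (by omega)
        have := Nat.lt_floor_add_one (τ * m)
        rw [hθ, hKe]; linarith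
      · have hKe : K = m - 1 := min_eq_right (by omega)
        have h2 : τ * m ≤ m := by
          nlinarith [Nat.cast_nonneg (α := ℝ) m]
        have h3 : ((m - 1 : ℕ) : ℝ) = (m : ℝ) - 1 := by
          rw [Nat.cast_sub hm]; simp
        rw [hθ, hKe, h3]; linarith
    have hKτ : (K:ℝ) ≤ τ * m := by rw [hθ] at hθ0; linarith
    -- ψ τ = (1-θ) * s K + θ * s (K+1)
    have hψτ : ψ τ = (1 - θ) * s K + θ * s (K + 1) := by
      simp only [hψ]
      have hsplit : Finset.range m = Finset.range (K+1) ∪ Finset.Ico (K+1) m := by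
        rw [Finset.range_eq_Ico, ← Finset.Ico_union_Ico_eq_Ico (Nat.zero_le (K+1)) hKm,
          ← Finset.range_eq_Ico]
      have hdisj : Disjoint (Finset.range (K+1)) (Finset.Ico (K+1) m) := by
        simp only [Finset.disjoint_left, Finset.mem_range, Finset.mem_Ico]
        intro a ha h; omega
      rw [hsplit, Finset.sum_union hdisj, Finset.sum_range_succ]
      have e1 : ∑ j ∈ Finset.range K, (s (j + 1) - s j) * (min (max (τ * m - j) 0) 1)
          = s K - s 0 := by
        rw [← Finset.sum_range_sub s K]
        apply Finset.sum_congr rfl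
        intro j hj
        have hj' : (j:ℝ) + 1 ≤ K := by
          exact_mod_cast Nat.succ_le_of_lt (Finset.mem_range.1 hj)
        have h1 : (1:ℝ) ≤ τ * m - j := by linarith
        rw [max_eq_left (by linarith), min_eq_right h1, mul_one]
      have e2 : (s (K + 1) - s K) * (min (max (τ * m - K) 0) 1) = (s (K+1) - s K) * θ := by
        rw [← hθ, max_eq_left hθ0, min_eq_left hθ1]
      have e3 : ∑ j ∈ Finset.Ico (K+1) m,
          (s (j + 1) - s j) * (min (max (τ * m - j) 0) 1) = 0 := by
        apply Finset.sum_eq_zero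
        intro j hj
        have hj' : (K:ℝ) + 1 ≤ j := by
          exact_mod_cast (Finset.mem_Ico.1 hj).1
        have : max (τ * m - j) 0 = 0 := max_eq_right (by rw [hθ] at hθ1; linarith)
        rw [this]; simp
      rw [e1, e2, e3, hs0]; ring
    -- polyParam p τ
    set A := p ⟨K, Nat.lt_succ_of_le hKm.le⟩ with hA
    set B := p ⟨K + 1, Nat.lt_succ_of_le hKm⟩ with hB
    have hfin1 : (⟨min K m, Nat.lt_succ_of_le (min_le_right K m)⟩ : Fin (m+1))
        = ⟨K, Nat.lt_succ_of_le hKm.le⟩ := by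
      apply Fin.ext; simp [min_eq_left hKm.le]
    have hfin2 : (⟨min (K+1) m, Nat.lt_succ_of_le (min_le_right (K+1) m)⟩ : Fin (m+1))
        = ⟨K + 1, Nat.lt_succ_of_le hKm⟩ := by
      apply Fin.ext; simp [min_eq_left (Nat.succ_le_of_lt hKm)]
    have hpp : polyParam p τ = A + θ • (B - A) := by
      have h0 : polyParam p τ = p ⟨min K m, Nat.lt_succ_of_le (min_le_right K m)⟩ +
          (τ * m - (K : ℝ)) • (p ⟨min (K+1) m, Nat.lt_succ_of_le (min_le_right (K+1) m)⟩
            - p ⟨min K m, Nat.lt_succ_of_le (min_le_right K m)⟩) := rfl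
      rw [h0, hfin1, hfin2, ← hθ, ← hA, ← hB]
    -- the matched point
    have hmp : u + ψ τ • (v - u) =
        (u + s K • (v - u)) + θ • ((u + s (K+1) • (v - u)) - (u + s K • (v - u))) := by
      rw [hψτ]
      module
    rw [hpp, hmp]
    set C := u + s K • (v - u) with hC
    set D := u + s (K+1) • (v - u) with hD
    have hdc : dist (A + θ • (B - A)) (C + θ • (D - C)) ≤
        (1 - θ) * dist A C + θ * dist B D := by
      rw [dist_eq_norm]
      have he : A + θ • (B - A) - (C + θ • (D - C)) = (1 - θ) • (A - C) + θ • (B - D) := by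
        module
      rw [he]
      calc ‖(1 - θ) • (A - C) + θ • (B - D)‖
          ≤ ‖(1 - θ) • (A - C)‖ + ‖θ • (B - D)‖ := norm_add_le _ _
        _ = (1 - θ) * ‖A - C‖ + θ * ‖B - D‖ := by
            rw [norm_smul, norm_smul, Real.norm_eq_abs, Real.norm_eq_abs,
              abs_of_nonneg (by linarith), abs_of_nonneg hθ0]
        _ = (1 - θ) * dist A C + θ * dist B D := by rw [dist_eq_norm, dist_eq_norm]
    have h1 : dist A C ≤ ε := hclose K hKm.le
    have h2 : dist B D ≤ ε := hclose (K+1) hKm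
    calc dist (A + θ • (B - A)) (C + θ • (D - C))
        ≤ (1 - θ) * dist A C + θ * dist B D := hdc
      _ ≤ (1 - θ) * ε + θ * ε := by
          apply add_le_add
          · exact mul_le_mul_of_nonneg_left h1 (by linarith)
          · exact mul_le_mul_of_nonneg_left h2 hθ0
      _ = ε := by ring
  exact ⟨id, ψ, continuousOn_id, hψcont.continuousOn,
    (monotone_id).monotoneOn _, hψmono.monotoneOn _,
    Set.mapsTo_id _, fun x hx => by
      constructor
      · rw [← hψ0]; exact hψmono hx.1
      · rw [← hψ1]; exact hψmono hx.2,
    rfl, hψ0, rfl, hψ1, key⟩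

set_option maxHeartbeats 2000000 in
/-- Every `t`-path is a `(√(t² − t) / √2)`-Fréchet-path. -/
theorem tpath_is_small_t_frechet_path (t : ℝ) (ht : 1 ≤ t)
    (u v : EuclideanSpace ℝ (Fin 2)) (m : ℕ) (hm : 1 ≤ m)
    (p : Fin (m + 1) → EuclideanSpace ℝ (Fin 2))
    (hpu : p 0 = u) (hpv : p (Fin.last m) = v)
    (hlen : ∑ k : Fin m, dist (p k.castSucc) (p k.succ) ≤ t * dist u v) :
    FrechetMatchingWithin p u v (Real.sqrt (t ^ 2 - t) / Real.sqrt 2 * dist u v) := by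
  set d : ℝ := dist u v with hd
  rcases eq_or_lt_of_le (dist_nonneg : (0:ℝ) ≤ d) with hd0 | hd0
  · -- degenerate case : u = v, path constant
    have huv : u = v := by rw [← dist_eq_zero]; exact hd0.symm
    have hz : ∀ k : Fin m, dist (p k.castSucc) (p k.succ) = 0 := by
      have hsum : ∑ k : Fin m, dist (p k.castSucc) (p k.succ) = 0 := by
        apply le_antisymm
        · calc _ ≤ t * d := hlen
            _ = 0 := by rw [hd, ← hd0]; ring
        · exact Finset.sum_nonneg fun i _ => dist_nonneg
      intro k
      have := (Finset.sum_eq_zero_iff_of_nonneg (fun i _ => dist_nonneg)).1 hsum k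
        (Finset.mem_univ k)
      exact this
    have hall : ∀ k : ℕ, (hk : k ≤ m) → p ⟨k, Nat.lt_succ_of_le hk⟩ = u := by
      intro k
      induction k with
      | zero => intro hk; exact hpu
      | succ i ih =>
        intro hk
        have hi : i < m := hk
        have h0 := hz ⟨i, hi⟩
        rw [dist_eq_zero] at h0
        have h1 : (⟨i, hi⟩ : Fin m).castSucc = ⟨i, Nat.lt_succ_of_le hi.le⟩ := rfl
        have h2 : (⟨i, hi⟩ : Fin m).succ = ⟨i + 1, Nat.lt_succ_of_le hk⟩ := rfl
        rw [h1, h2] at h0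
        rw [← h0]
        exact ih hi.le
    apply frechet_of_discrete hm p u v _ (fun k => (k : ℝ) / m)
    · intro a b hab
      have hmpos : (0:ℝ) < m := by exact_mod_cast hm
      exact (div_le_div_iff_of_pos_right hmpos).2 (by exact_mod_cast hab)
    · simp
    · apply div_self
      exact Nat.cast_ne_zero.2 (by omega)
    · intro k hk
      rw [hall k hk, ← huv, sub_self, smul_zero, add_zero, dist_self]
      positivity
  · -- main case
    have hdne : d ≠ 0 := hd0.ne'
    set q : ℕ → EuclideanSpace ℝ (Fin 2) :=
      fun i => p ⟨min i m, Nat.lt_succ_of_le (min_le_right _ _)⟩ with hqdef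
    have hq : ∀ k : ℕ, (hk : k ≤ m) → q k = p ⟨k, Nat.lt_succ_of_le hk⟩ := by
      intro k hk
      simp only [hqdef]
      exact congrArg p (Fin.ext (by simpa using min_eq_left hk))
    have hq0 : q 0 = u := by rw [hq 0 (Nat.zero_le m)]; exact hpu
    have hqm : q m = v := by rw [hq m le_rfl]; exact hpv
    have hlen' : ∑ i ∈ Finset.range m, dist (q i) (q (i + 1)) ≤ t * d := by
      rw [← Fin.sum_univ_eq_sum_range (fun i => dist (q i) (q (i + 1))) m]
      calc ∑ i : Fin m, dist (q i) (q (i + 1))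
          = ∑ k : Fin m, dist (p k.castSucc) (p k.succ) := by
            apply Finset.sum_congr rfl
            intro k _
            rw [hq k k.prop.le, hq (k + 1) k.prop]
            congr 1
        _ ≤ t * d := hlen
    have hseg : ∀ a b : ℕ, a ≤ b →
        dist (q a) (q b) ≤ ∑ i ∈ Finset.Ico a b, dist (q i) (q (i + 1)) := by
      intro a b hab
      have h := dist_le_range_sum_dist (fun i => q (a + i)) (b - a)
      rw [Finset.sum_Ico_eq_sum_range]
      simpa [Nat.add_sub_cancel' hab, add_assoc] using h
    have chain : ∀ j k : ℕ, j ≤ k → k ≤ m →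
        dist u (q j) + dist (q j) (q k) + dist (q k) v ≤ t * d := by
      intro j k hjk hkm
      have h1 := hseg 0 j (Nat.zero_le _)
      have h2 := hseg j k hjk
      have h3 := hseg k m hkm
      have e1 : ∑ i ∈ Finset.Ico 0 j, dist (q i) (q (i+1))
          + ∑ i ∈ Finset.Ico j k, dist (q i) (q (i+1))
          + ∑ i ∈ Finset.Ico k m, dist (q i) (q (i+1))
          = ∑ i ∈ Finset.Ico 0 m, dist (q i) (q (i+1)) := by
        rw [Finset.sum_Ico_consecutive _ (Nat.zero_le j) hjk,
          Finset.sum_Ico_consecutive _ (Nat.zero_le k) hkm]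
      rw [← Finset.range_eq_Ico] at e1 h1
      rw [← Finset.range_eq_Ico] at e1
      rw [← hq0, ← hqm]
      linarith
    -- projection quantities
    set W : EuclideanSpace ℝ (Fin 2) := v - u with hWdef
    have hW : ‖W‖ = d := by rw [hWdef, hd, dist_eq_norm, norm_sub_rev]
    have hWW : (inner ℝ W W : ℝ) = d ^ 2 := by rw [real_inner_self_eq_norm_sq, hW]
    set g : ℕ → ℝ := fun j => (inner ℝ (q j - u) W : ℝ) / d ^ 2 with hgdef
    set M : ℕ → ℝ := fun k => (Finset.range (k + 1)).sup' Finset.nonempty_range_add_one g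
      with hMdef
    set s : ℕ → ℝ := fun k => min (M k) 1 with hsdef
    have hg0 : g 0 = 0 := by simp [hgdef, hq0]
    have hgm : g m = 1 := by
      simp only [hgdef, hqm, ← hWdef, hWW]
      exact div_self (pow_ne_zero 2 hdne)
    have hMmono : Monotone M := fun a b hab =>
      Finset.sup'_mono g (Finset.range_subset_range.2 (by omega)) _
    have hMge : ∀ j k : ℕ, j ≤ k → g j ≤ M k := fun j k hjk =>
      Finset.le_sup' g (Finset.mem_range.2 (by omega))
    have hsmono : Monotone s := fun a b hab => min_le_min (hMmono hab) le_rfl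
    have hs0 : s 0 = 0 := by
      have hub : M 0 ≤ g 0 := by
        apply Finset.sup'_le
        intro i hi
        have : i = 0 := by simpa using hi
        subst this
        exact le_rfl
      have h1 : M 0 = g 0 := le_antisymm hub (hMge 0 0 le_rfl)
      simp [hsdef, h1, hg0]
    have hsm' : s m = 1 := by
      have h1 : (1:ℝ) ≤ M m := hgm ▸ hMge m m le_rfl
      simp only [hsdef]
      exact min_eq_right h1
    -- the key closeness estimate
    have hclose : ∀ k : ℕ, (hk : k ≤ m) →
        dist (p ⟨k, Nat.lt_succ_of_le hk⟩) (u + s k • (v - u))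
          ≤ Real.sqrt (t ^ 2 - t) / Real.sqrt 2 * d := by
      intro k hk
      rw [← hq k hk, ← hWdef]
      obtain ⟨j, hjmem, hjeq⟩ :=
        Finset.exists_mem_eq_sup' (Finset.nonempty_range_add_one (n := k)) g
      have hjk : j ≤ k := by
        have := Finset.mem_range.1 hjmem; omega
      set x := q k with hx
      set y := q j with hy
      set β := g k with hβdef
      set α := g j with hαdef
      set σ := s k with hσdef
      have hMk : M k = α := hjeq
      have hσ : σ = min (M k) 1 := rfl
      have hβx : (inner ℝ (x - u) W : ℝ) = β * d ^ 2 := by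
        rw [hβdef, hgdef]
        field_simp; rfl
      have hαy : (inner ℝ (y - u) W : ℝ) = α * d ^ 2 := by
        rw [hαdef, hgdef]
        field_simp; rfl
      have hβM : β ≤ M k := hMge k k le_rfl
      have hσα : σ ≤ α := by rw [hσ, hMk] at *; exact min_le_left _ _
      have chain1 : dist u x + dist x v ≤ t * d := by
        have h := chain k k le_rfl hk
        rw [dist_self] at h
        linarith
      have chain2 : dist u y + dist y x + dist x v ≤ t * d := chain j k hjk hk
      -- projection lower bounds for distances
      have div_aux : ∀ A B : ℝ, A * d ^ 2 ≤ B * d → A * d ≤ B := by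
        intro A B h
        have h2 : A * d * d ≤ B * d := by rw [mul_assoc, ← pow_two]; exact h
        exact le_of_mul_le_mul_right h2 hd0
      have proj : ∀ a b : EuclideanSpace ℝ (Fin 2),
          (inner ℝ (a - b) W : ℝ) ≤ dist b a * d := by
        intro a b
        calc (inner ℝ (a - b) W : ℝ) ≤ ‖a - b‖ * ‖W‖ := real_inner_le_norm _ _
          _ = dist b a * d := by rw [hW, ← dist_eq_norm, dist_comm]
      have f1 : α * d ≤ dist u y := by
        apply div_aux
        rw [← hαy]
        exact proj y u
      have f2 : (α - β) * d ≤ dist y x := by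
        have hyx : y - x = (y - u) - (x - u) := by abel
        have h := proj y x
        rw [hyx, inner_sub_left, hαy, hβx] at h
        rw [dist_comm]
        apply div_aux
        linarith
      have f3 : (1 - β) * d ≤ dist x v := by
        have hvx : v - x = W - (x - u) := by rw [hWdef]; abel
        have h := proj v x
        rw [hvx, inner_sub_left, hWW, hβx] at h
        apply div_aux
        linarith
      have f4 : β * d ≤ dist u x := by
        apply div_aux
        rw [← hβx]
        exact proj x u
      have f5 : (β - 1) * d ≤ dist x v := by
        have hxv : x - v = (x - u) - W := by rw [hWdef]; abel
        have h := proj x v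
        rw [hxv, inner_sub_left, hWW, hβx, dist_comm] at h
        apply div_aux
        linarith
      -- the perpendicular component bound
      set P : EuclideanSpace ℝ (Fin 2) := x - u with hPdef
      set Q : EuclideanSpace ℝ (Fin 2) := v - x with hQdef
      set Z : EuclideanSpace ℝ (Fin 2) := P - β • W with hZdef
      have hZW : (inner ℝ Z W : ℝ) = 0 := by
        rw [hZdef, inner_sub_left, real_inner_smul_left, hβx, hWW]
        ring
      have hWZ : (inner ℝ W Z : ℝ) = 0 := by rw [real_inner_comm]; exact hZW
      have hZsq : ‖Z‖ ^ 2 = ‖P‖ ^ 2 - β ^ 2 * d ^ 2 := by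
        rw [hZdef, norm_sub_sq_real, real_inner_smul_right, hβx, norm_smul,
          Real.norm_eq_abs, mul_pow, sq_abs, hW]
        ring
      have hPZ : (inner ℝ P Z : ℝ) = ‖Z‖ ^ 2 := by
        have hP' : P = Z + β • W := by rw [hZdef]; abel
        rw [hP', inner_add_left, real_inner_smul_left, real_inner_self_eq_norm_sq, hWZ]
        ring
      have hQZ : (inner ℝ Q Z : ℝ) = -(‖Z‖ ^ 2) := by
        have hQ' : Q = W - P := by rw [hQdef, hWdef, hPdef]; abel
        rw [hQ', inner_sub_left, hWZ, hPZ]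
        ring
      have hQ2Z : ‖Q + (2:ℝ) • Z‖ = ‖Q‖ := by
        have hsq : ‖Q + (2:ℝ) • Z‖ ^ 2 = ‖Q‖ ^ 2 := by
          rw [norm_add_sq_real, real_inner_smul_right, hQZ, norm_smul, Real.norm_eq_abs,
            mul_pow, sq_abs]
          ring
        calc ‖Q + (2:ℝ) • Z‖ = Real.sqrt (‖Q + (2:ℝ) • Z‖ ^ 2) :=
              (Real.sqrt_sq (norm_nonneg _)).symm
          _ = Real.sqrt (‖Q‖ ^ 2) := by rw [hsq]
          _ = ‖Q‖ := Real.sqrt_sq (norm_nonneg _)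
      have hWZ2 : ‖W + (2:ℝ) • Z‖ ^ 2 = d ^ 2 + 4 * ‖Z‖ ^ 2 := by
        rw [norm_add_sq_real, real_inner_smul_right, hWZ, norm_smul, Real.norm_eq_abs,
          mul_pow, sq_abs, hW]
        ring
      have htri : ‖W + (2:ℝ) • Z‖ ≤ dist u x + dist x v := by
        have hPQ : W + (2:ℝ) • Z = P + (Q + (2:ℝ) • Z) := by
          rw [hPdef, hQdef, hWdef]; abel
        have hPd : ‖P‖ = dist u x := by rw [hPdef, ← dist_eq_norm, dist_comm]
        have hQd : ‖Q‖ = dist x v := by rw [hQdef, ← dist_eq_norm, dist_comm]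
        calc ‖W + (2:ℝ) • Z‖ = ‖P + (Q + (2:ℝ) • Z)‖ := by rw [hPQ]
          _ ≤ ‖P‖ + ‖Q + (2:ℝ) • Z‖ := norm_add_le _ _
          _ = dist u x + dist x v := by rw [hQ2Z, hPd, hQd]
      have hperp : ‖Z‖ ^ 2 ≤ (t ^ 2 - 1) * d ^ 2 / 4 := by
        have h1 : ‖W + (2:ℝ) • Z‖ ≤ t * d := htri.trans chain1
        have h2 : ‖W + (2:ℝ) • Z‖ * ‖W + (2:ℝ) • Z‖ ≤ (t * d) * (t * d) :=
          mul_self_le_mul_self (norm_nonneg _) h1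
        have h3 : ‖W + (2:ℝ) • Z‖ ^ 2 ≤ (t * d) ^ 2 := by
          rw [pow_two, pow_two]; exact h2
        rw [hWZ2] at h3
        linarith only [h3]
      -- the parallel component bound
      have hα0 : 0 ≤ α := by rw [← hMk]; exact hg0 ▸ hMge 0 k (Nat.zero_le k)
      have hF2 : (σ - β) ^ 2 ≤ (t - 1) ^ 2 / 4 := by
        rcases le_or_gt β σ with hcase | hcase
        · have hab : (2 * (α - β) + 1) * d ≤ t * d := by
            have e : (2 * (α - β) + 1) * d = α * d + (α - β) * d + (1 - β) * d := by ring
            rw [e]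
            linarith [f1, f2, f3, chain2]
          have h2 : α - β ≤ (t - 1) / 2 := by
            have := le_of_mul_le_mul_right hab hd0
            linarith
          have h4 : (σ - β) * (σ - β) ≤ ((t - 1) / 2) * ((t - 1) / 2) :=
            mul_self_le_mul_self (by linarith only [hcase]) (by linarith only [hcase, hσα, h2])
          calc (σ - β) ^ 2 = (σ - β) * (σ - β) := by ring
            _ ≤ ((t - 1) / 2) * ((t - 1) / 2) := h4
            _ = (t - 1) ^ 2 / 4 := by ring
        · have hβ1 : 1 < β := by
            by_contra hcon
            push_neg at hcon
            have : β ≤ σ := by rw [hσ]; exact le_min hβM hcon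
            linarith
          have hσ1 : σ = 1 := by
            rw [hσ]
            exact min_eq_right (le_trans hβ1.le hβM)
          have h3 : (2 * β - 1) * d ≤ t * d := by
            have e : (2 * β - 1) * d = β * d + (β - 1) * d := by ring
            rw [e]
            linarith [f4, f5, chain1]
          have h2 : β - 1 ≤ (t - 1) / 2 := by
            have := le_of_mul_le_mul_right h3 hd0
            linarith
          rw [hσ1]
          have h4 : (β - 1) * (β - 1) ≤ ((t - 1) / 2) * ((t - 1) / 2) :=
            mul_self_le_mul_self (by linarith only [hβ1]) h2
          calc ((1:ℝ) - β) ^ 2 = (β - 1) * (β - 1) := by ring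
            _ ≤ ((t - 1) / 2) * ((t - 1) / 2) := h4
            _ = (t - 1) ^ 2 / 4 := by ring
      -- conclusion
      have hdist2 : dist x (u + σ • W) ^ 2 ≤ (t ^ 2 - t) / 2 * d ^ 2 := by
        have he : x - (u + σ • W) = P - σ • W := by rw [hPdef]; abel
        have hnorm : ‖P - σ • W‖ ^ 2 = ‖Z‖ ^ 2 + (σ - β) ^ 2 * d ^ 2 := by
          rw [norm_sub_sq_real, real_inner_smul_right, hβx, norm_smul,
            Real.norm_eq_abs, mul_pow, sq_abs, hW]
          linear_combination -hZsq
        rw [dist_eq_norm, he, hnorm]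
        have h4 : (σ - β) ^ 2 * d ^ 2 ≤ (t - 1) ^ 2 / 4 * d ^ 2 :=
          mul_le_mul_of_nonneg_right hF2 (sq_nonneg d)
        calc ‖Z‖ ^ 2 + (σ - β) ^ 2 * d ^ 2
            ≤ (t ^ 2 - 1) * d ^ 2 / 4 + (t - 1) ^ 2 / 4 * d ^ 2 := add_le_add hperp h4
          _ = (t ^ 2 - t) / 2 * d ^ 2 := by ring
      have hrhs : Real.sqrt (t ^ 2 - t) / Real.sqrt 2 * d
          = Real.sqrt ((t ^ 2 - t) / 2 * d ^ 2) := by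
        have ht1 : (0:ℝ) ≤ t ^ 2 - t := by
          have e : t ^ 2 - t = t * (t - 1) := by ring
          rw [e]
          exact mul_nonneg (by linarith only [ht]) (by linarith only [ht])
        rw [Real.sqrt_mul (by positivity) (d ^ 2), Real.sqrt_sq hd0.le,
          Real.sqrt_div ht1 2]
      calc dist x (u + σ • W) = Real.sqrt (dist x (u + σ • W) ^ 2) :=
            (Real.sqrt_sq dist_nonneg).symm
        _ ≤ Real.sqrt ((t ^ 2 - t) / 2 * d ^ 2) := Real.sqrt_le_sqrt hdist2
        _ = Real.sqrt (t ^ 2 - t) / Real.sqrt 2 * d := hrhs.symm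
    exact frechet_of_discrete hm p u v _ s hsmono hs0 hsm' hclose
end

section
/- Let t ≥ 1, let S be a finite set of points in EuclideanSpace ℝ (Fin 2) and let E ⊆ S × S be a symmetric edge set such that the graph (S, E) is a t-spanner. Then for all u, v ∈ S there exists m ≥ 1 and a graph path p : Fin (m+1) → S from u to v (with (p k, p (k+1)) ∈ E for all k < m) that admits a Fréchet matching to the segment from u to v within (Real.sqrt (t^2 − t) / Real.sqrt 2) · dist u v; that is, (S, E) is a (√(t²−t)/√2)-Fréchet-spanner. -/
lemma dist_sq_convex {F : Type*} [NormedAddCommGroup F] [InnerProductSpace ℝ F]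
    (x u v : F) (lam : ℝ) :
    dist x (u + lam • (v - u)) ^ 2 =
      (1 - lam) * dist x u ^ 2 + lam * dist x v ^ 2 - lam * (1 - lam) * dist u v ^ 2 := by
  simp only [dist_eq_norm]
  rw [show x - (u + lam • (v - u)) = (x - u) - lam • (v - u) by abel,
      show x - v = (x - u) - (v - u) by abel,
      show u - v = -(v - u) by abel, norm_neg]
  set c := x - u with hc
  set w := v - u with hw
  rw [norm_sub_sq_real c (lam • w), norm_sub_sq_real c w, real_inner_smul_right, norm_smul]
  simp only [mul_pow, sq_abs, Real.norm_eq_abs]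
  ring


set_option maxHeartbeats 4000000 in
/-- Any `t`-spanner of a planar point set is a `(√(t² − t) / √2)`-Fréchet-spanner. -/
theorem tspanner_is_small_t_frechet_spanner (t : ℝ) (ht : 1 ≤ t)
    (S : Finset (EuclideanSpace ℝ (Fin 2)))
    (E : Set (EuclideanSpace ℝ (Fin 2) × EuclideanSpace ℝ (Fin 2)))
    (hES : ∀ e ∈ E, e.1 ∈ S ∧ e.2 ∈ S)
    (hsymm : ∀ a b, (a, b) ∈ E → (b, a) ∈ E)
    (hspan : ∀ u ∈ S, ∀ v ∈ S, ∃ m : ℕ, 1 ≤ m ∧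
      ∃ p : Fin (m + 1) → EuclideanSpace ℝ (Fin 2),
        p 0 = u ∧ p (Fin.last m) = v ∧
        (∀ k : Fin m, (p k.castSucc, p k.succ) ∈ E) ∧
        ∑ k : Fin m, dist (p k.castSucc) (p k.succ) ≤ t * dist u v) :
    ∀ u ∈ S, ∀ v ∈ S, ∃ m : ℕ, 1 ≤ m ∧
      ∃ p : Fin (m + 1) → EuclideanSpace ℝ (Fin 2),
        p 0 = u ∧ p (Fin.last m) = v ∧
        (∀ k : Fin m, (p k.castSucc, p k.succ) ∈ E) ∧
        FrechetMatchingWithin p u v (Real.sqrt (t ^ 2 - t) / Real.sqrt 2 * dist u v) := by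
  intro u hu v hv
  obtain ⟨m, hm1, p, hp0, hpl, hpe, hplen⟩ := hspan u hu v hv
  refine ⟨m, hm1, p, hp0, hpl, hpe, ?_⟩
  set q : ℕ → EuclideanSpace ℝ (Fin 2) :=
    fun j => p ⟨min j m, Nat.lt_succ_of_le (min_le_right _ _)⟩ with hq
  set ℓ : ℕ → ℝ := fun j => dist (q j) (q (j + 1)) with hℓ
  set L : ℝ := ∑ j ∈ Finset.range m, ℓ j with hLdef
  have hq0 : q 0 = u := by
    show p ⟨min 0 m, Nat.lt_succ_of_le (min_le_right _ _)⟩ = u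
    have h : (⟨min 0 m, Nat.lt_succ_of_le (min_le_right _ _)⟩ : Fin (m + 1)) = 0 := by
      ext; simp
    rw [h]; exact hp0
  have hqm : q m = v := by
    show p ⟨min m m, Nat.lt_succ_of_le (min_le_right _ _)⟩ = v
    have h : (⟨min m m, Nat.lt_succ_of_le (min_le_right _ _)⟩ : Fin (m + 1)) = Fin.last m := by
      ext; simp [Fin.last]
    rw [h]; exact hpl
  have hpoly : ∀ τ : ℝ, polyParam p τ =
      q (min ⌊τ * m⌋₊ (m - 1)) +
        (τ * m - (min ⌊τ * m⌋₊ (m - 1) : ℕ)) •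
          (q (min ⌊τ * m⌋₊ (m - 1) + 1) - q (min ⌊τ * m⌋₊ (m - 1))) := fun τ => rfl
  have hℓnn : ∀ j, 0 ≤ ℓ j := fun j => dist_nonneg
  have hLt : L ≤ t * dist u v := by
    rw [hLdef, ← Fin.sum_univ_eq_sum_range (fun j => ℓ j) m]
    refine le_trans (le_of_eq (Finset.sum_congr rfl fun k _ => ?_)) hplen
    show dist (q ↑k) (q (↑k + 1)) = dist (p k.castSucc) (p k.succ)
    congr 1
    · exact congrArg p (Fin.ext (by simp [Nat.min_eq_left k.isLt.le]))
    · exact congrArg p (Fin.ext (by simp [Nat.min_eq_left k.isLt]))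
  have hdL : dist u v ≤ L := by
    rw [← hq0, ← hqm, hLdef]
    exact dist_le_range_sum_dist q m
  by_cases hd0 : dist u v = 0
  · -- degenerate case: u = v, the whole path is constant
    have hL0 : L = 0 :=
      le_antisymm (by rw [hd0] at hLt; linarith) (Finset.sum_nonneg fun j _ => hℓnn j)
    have hℓ0 : ∀ j ∈ Finset.range m, ℓ j = 0 :=
      (Finset.sum_eq_zero_iff_of_nonneg (fun j _ => hℓnn j)).1 (by rw [← hLdef]; exact hL0)
    have hqconst : ∀ j, q j = u := by
      intro j
      induction j with
      | zero => exact hq0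
      | succ n ih =>
        by_cases hn : n < m
        · have h : dist (q n) (q (n + 1)) = 0 := hℓ0 n (Finset.mem_range.2 hn)
          rw [← ih]; exact (dist_eq_zero.1 h).symm
        · have h1 : min (n + 1) m = m := min_eq_right (by omega)
          have h2 : min n m = m := min_eq_right (by omega)
          show p ⟨min (n + 1) m, Nat.lt_succ_of_le (min_le_right _ _)⟩ = u
          rw [← ih]
          show p _ = p ⟨min n m, Nat.lt_succ_of_le (min_le_right _ _)⟩
          exact congrArg p (Fin.ext (by simp [h1, h2]))
    have hvu : v = u := by rw [dist_eq_zero] at hd0; exact hd0.symm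
    refine ⟨id, id, continuousOn_id, continuousOn_id, fun a _ b _ h => h, fun a _ b _ h => h,
      Set.mapsTo_id _, Set.mapsTo_id _, rfl, rfl, rfl, rfl, ?_⟩
    intro τ hτ
    have hx : polyParam p (id τ) = u := by
      rw [id_eq, hpoly τ]
      simp [hqconst]
    rw [hx, hvu]
    simp [hd0]
  · -- main case
    have hd : 0 < dist u v := lt_of_le_of_ne dist_nonneg (Ne.symm hd0)
    have hL : 0 < L := lt_of_lt_of_le hd hdL
    set A : ℝ → ℝ := fun τ => ∑ j ∈ Finset.range m, ℓ j * min 1 (max 0 (τ * m - j)) with hA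
    have hclamp01 : ∀ x : ℝ, 0 ≤ min 1 (max 0 x) ∧ min 1 (max 0 x) ≤ 1 :=
      fun x => ⟨le_min zero_le_one (le_max_left _ _), min_le_left _ _⟩
    have hAnn : ∀ τ, 0 ≤ A τ :=
      fun τ => Finset.sum_nonneg fun j _ => mul_nonneg (hℓnn j) (hclamp01 _).1
    have hAle : ∀ τ, A τ ≤ L := by
      intro τ
      rw [hLdef]
      refine Finset.sum_le_sum fun j _ => ?_
      calc ℓ j * min 1 (max 0 (τ * m - j)) ≤ ℓ j * 1 :=
            mul_le_mul_of_nonneg_left (hclamp01 _).2 (hℓnn j)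
        _ = ℓ j := mul_one _
    have hA0 : A 0 = 0 := by
      refine Finset.sum_eq_zero fun j _ => ?_
      have h : max 0 ((0 : ℝ) * m - j) = 0 := max_eq_left (by simp)
      rw [h]; simp
    have hA1 : A 1 = L := by
      rw [hLdef]
      refine Finset.sum_congr rfl fun j hj => ?_
      have hj' : (j : ℝ) + 1 ≤ m := by exact_mod_cast Nat.succ_le_of_lt (Finset.mem_range.1 hj)
      have h1 : max 0 ((1 : ℝ) * m - j) = (1 : ℝ) * m - j := max_eq_right (by linarith)
      have h2 : min 1 ((1 : ℝ) * m - j) = 1 := min_eq_left (by linarith)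
      rw [h1, h2, mul_one]
    have hAmono : Monotone A := by
      intro x y hxy
      refine Finset.sum_le_sum fun j _ => ?_
      refine mul_le_mul_of_nonneg_left (min_le_min le_rfl (max_le_max le_rfl ?_)) (hℓnn j)
      have : x * m ≤ y * m := mul_le_mul_of_nonneg_right hxy (Nat.cast_nonneg m)
      linarith
    have hAcont : Continuous A := by
      refine continuous_finset_sum _ fun j _ => ?_
      exact continuous_const.mul (continuous_const.min (continuous_const.max
        ((continuous_id.mul continuous_const).sub continuous_const)))
    have hψm : MonotoneOn (fun τ => A τ / L) (Set.Icc (0:ℝ) 1) := by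
      intro a _ b _ hab
      exact div_le_div_of_nonneg_right (hAmono hab) hL.le
    have hψmt : Set.MapsTo (fun τ => A τ / L) (Set.Icc (0:ℝ) 1) (Set.Icc (0:ℝ) 1) := by
      intro τ _
      refine ⟨div_nonneg (hAnn τ) hL.le, ?_⟩
      show A τ / L ≤ 1
      rw [div_le_one hL]; exact hAle τ
    have hψ0 : A 0 / L = 0 := by rw [hA0]; simp
    have hψ1 : A 1 / L = 1 := by rw [hA1]; exact div_self hL.ne'
    refine ⟨id, fun τ => A τ / L, continuousOn_id, (hAcont.div_const L).continuousOn,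
      fun a _ b _ h => h, hψm, Set.mapsTo_id _, hψmt, rfl, hψ0, rfl, hψ1, ?_⟩
    intro τ hτ
    obtain ⟨hτ0, hτ1⟩ := hτ
    set k : ℕ := min ⌊τ * m⌋₊ (m - 1) with hk
    have hkm : k < m := lt_of_le_of_lt (min_le_right _ _) (Nat.sub_lt hm1 one_pos)
    set s : ℝ := τ * m - k with hs
    have hsk : τ * m = s + k := by rw [hs]; ring
    have hτm0 : 0 ≤ τ * m := mul_nonneg hτ0 (Nat.cast_nonneg m)
    have hs0 : 0 ≤ s := by
      have h1 : (k : ℝ) ≤ ⌊τ * m⌋₊ := Nat.cast_le.2 (min_le_left _ _)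
      have h2 : (⌊τ * m⌋₊ : ℝ) ≤ τ * m := Nat.floor_le hτm0
      rw [hs]; linarith
    have hs1 : s ≤ 1 := by
      rcases le_or_gt ⌊τ * m⌋₊ (m - 1) with h | h
      · have hkk : (k : ℝ) = ⌊τ * m⌋₊ := by rw [hk]; exact_mod_cast min_eq_left h
        have := Nat.lt_floor_add_one (τ * m)
        rw [hs, hkk]; linarith
      · have hkk : k = m - 1 := by rw [hk]; exact min_eq_right h.le
        have h1 : (k : ℝ) + 1 = m := by
          rw [hkk]
          exact_mod_cast congrArg (Nat.cast : ℕ → ℝ) (Nat.succ_pred_eq_of_pos hm1)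
        have h2 : τ * m ≤ m := by
          calc τ * m ≤ 1 * m := mul_le_mul_of_nonneg_right hτ1 (Nat.cast_nonneg m)
            _ = m := one_mul _
        rw [hs]; linarith
    -- arclength at time τ
    have hAτ : A τ = (∑ j ∈ Finset.range k, ℓ j) + s * ℓ k := by
      show (∑ j ∈ Finset.range m, ℓ j * min 1 (max 0 (τ * m - j))) = _
      rw [← Finset.sum_range_add_sum_Ico (fun j => ℓ j * min 1 (max 0 (τ * m - j)))
        (Nat.succ_le_of_lt hkm), Finset.sum_range_succ]
      have htail : ∑ j ∈ Finset.Ico (k + 1) m, ℓ j * min 1 (max 0 (τ * m - j)) = 0 := by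
        refine Finset.sum_eq_zero fun j hj => ?_
        have hjk : (k : ℝ) + 1 ≤ j := by exact_mod_cast (Finset.mem_Ico.1 hj).1
        have h : max 0 (τ * m - j) = 0 := max_eq_left (by linarith [hsk, hs1])
        rw [h]; simp
      have hmid : min 1 (max 0 (τ * m - (k : ℕ))) = s := by
        rw [← hs, max_eq_right hs0, min_eq_right hs1]
      have hhead : ∑ j ∈ Finset.range k, ℓ j * min 1 (max 0 (τ * m - j)) =
          ∑ j ∈ Finset.range k, ℓ j := by
        refine Finset.sum_congr rfl fun j hj => ?_
        have hjk : (j : ℝ) + 1 ≤ k := by exact_mod_cast Finset.mem_range.1 hj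
        have h1 : (1 : ℝ) ≤ τ * m - j := by linarith [hsk, hs0]
        rw [min_eq_left (le_max_of_le_right h1), mul_one]
      rw [htail, hmid, hhead]
      ring
    have ha0 : 0 ≤ A τ := hAnn τ
    have haL : A τ ≤ L := hAle τ
    have hxq : polyParam p τ = q k + s • (q (k + 1) - q k) := by
      rw [hs, hk]; exact hpoly τ
    -- prefix bound
    have hux : dist u (polyParam p τ) ≤ A τ := by
      rw [hxq, hAτ]
      calc dist u (q k + s • (q (k + 1) - q k))
          ≤ dist u (q k) + dist (q k) (q k + s • (q (k + 1) - q k)) := dist_triangle _ _ _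
        _ ≤ (∑ j ∈ Finset.range k, ℓ j) + s * ℓ k := by
            refine add_le_add ?_ ?_
            · rw [← hq0]; exact dist_le_range_sum_dist q k
            · rw [dist_self_add_right, norm_smul, Real.norm_eq_abs, abs_of_nonneg hs0]
              have hnorm : ‖q (k + 1) - q k‖ = ℓ k := by
                rw [show ℓ k = dist (q k) (q (k + 1)) from rfl, dist_eq_norm, norm_sub_rev]
              rw [hnorm]
    -- suffix bound
    have hxv : dist (polyParam p τ) v ≤ L - A τ := by
      have hLsplit : L = (∑ j ∈ Finset.range k, ℓ j) + ℓ k +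
          ∑ j ∈ Finset.Ico (k + 1) m, ℓ j := by
        rw [hLdef, ← Finset.sum_range_add_sum_Ico ℓ (Nat.succ_le_of_lt hkm),
          Finset.sum_range_succ]
      have htail : dist (q (k + 1)) (q m) ≤ ∑ j ∈ Finset.Ico (k + 1) m, ℓ j := by
        have h := dist_le_range_sum_dist (fun i => q (k + 1 + i)) (m - (k + 1))
        have he : k + 1 + (m - (k + 1)) = m := by omega
        rw [he] at h
        refine le_trans h (le_of_eq ?_)
        rw [Finset.sum_Ico_eq_sum_range]
        exact Finset.sum_congr rfl fun i _ => by
          rw [show k + 1 + (i + 1) = (k + 1 + i) + 1 by omega]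
      have hseg : dist (polyParam p τ) (q (k + 1)) = (1 - s) * ℓ k := by
        rw [hxq, dist_eq_norm]
        have he : q k + s • (q (k + 1) - q k) - q (k + 1) = (s - 1) • (q (k + 1) - q k) := by
          module
        rw [he, norm_smul, Real.norm_eq_abs, abs_of_nonpos (by linarith : s - 1 ≤ 0), neg_sub]
        have hnorm : ‖q (k + 1) - q k‖ = ℓ k := by
          rw [show ℓ k = dist (q k) (q (k + 1)) from rfl, dist_eq_norm, norm_sub_rev]
        rw [hnorm]
      calc dist (polyParam p τ) v
          ≤ dist (polyParam p τ) (q (k + 1)) + dist (q (k + 1)) v := dist_triangle _ _ _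
        _ ≤ (1 - s) * ℓ k + ∑ j ∈ Finset.Ico (k + 1) m, ℓ j := by
            refine add_le_add (le_of_eq hseg) ?_
            rw [← hqm]; exact htail
        _ ≤ L - A τ := by rw [hAτ, hLsplit]; ring_nf; linarith
    -- the key quadratic estimate
    show dist (polyParam p (id τ)) (u + (A τ / L) • (v - u)) ≤ _
    clear_value A L ℓ q
    rw [id_eq]
    set lam : ℝ := A τ / L with hlam
    have hlam0 : 0 ≤ lam := div_nonneg ha0 hL.le
    have hlam1 : lam ≤ 1 := by rw [hlam, div_le_one hL]; exact haL
    have hkey := dist_sq_convex (polyParam p τ) u v lam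
    have h1 : dist (polyParam p τ) (u + lam • (v - u)) ^ 2 ≤
        (1 - lam) * A τ ^ 2 + lam * (L - A τ) ^ 2 - lam * (1 - lam) * dist u v ^ 2 := by
      rw [hkey]
      have e1 : dist (polyParam p τ) u ^ 2 ≤ A τ ^ 2 := by
        rw [dist_comm]
        exact pow_le_pow_left₀ dist_nonneg hux 2
      have e2 : dist (polyParam p τ) v ^ 2 ≤ (L - A τ) ^ 2 :=
        pow_le_pow_left₀ dist_nonneg hxv 2
      nlinarith [mul_le_mul_of_nonneg_left e1 (by linarith : (0:ℝ) ≤ 1 - lam),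
        mul_le_mul_of_nonneg_left e2 hlam0]
    have h2 : (1 - lam) * A τ ^ 2 + lam * (L - A τ) ^ 2 - lam * (1 - lam) * dist u v ^ 2 =
        A τ * (L - A τ) * (L ^ 2 - dist u v ^ 2) / L ^ 2 := by
      rw [hlam]
      field_simp
      ring
    have hL2d2 : 0 ≤ L ^ 2 - dist u v ^ 2 := by nlinarith
    have h3 : A τ * (L - A τ) * (L ^ 2 - dist u v ^ 2) / L ^ 2 ≤
        (L ^ 2 - dist u v ^ 2) / 4 := by
      rw [div_le_div_iff₀ (by positivity) (by norm_num)]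
      nlinarith [mul_nonneg hL2d2 (sq_nonneg (L - 2 * A τ))]
    have h4 : (L ^ 2 - dist u v ^ 2) / 4 ≤ (t ^ 2 - t) / 2 * dist u v ^ 2 := by
      have hL2 : L ^ 2 ≤ (t * dist u v) ^ 2 := pow_le_pow_left₀ hL.le hLt 2
      nlinarith [mul_nonneg (sq_nonneg (t - 1)) (sq_nonneg (dist u v))]
    have hεnn : 0 ≤ Real.sqrt (t ^ 2 - t) / Real.sqrt 2 * dist u v := by positivity
    have hε2 : (Real.sqrt (t ^ 2 - t) / Real.sqrt 2 * dist u v) ^ 2 =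
        (t ^ 2 - t) / 2 * dist u v ^ 2 := by
      rw [mul_pow, div_pow, Real.sq_sqrt (by nlinarith : (0:ℝ) ≤ t ^ 2 - t),
        Real.sq_sqrt (by norm_num : (0:ℝ) ≤ 2)]
    have hfin : dist (polyParam p τ) (u + lam • (v - u)) ^ 2 ≤
        (Real.sqrt (t ^ 2 - t) / Real.sqrt 2 * dist u v) ^ 2 := by
      rw [hε2]; linarith [h1, h2 ▸ (h3.trans h4)]
    have := Real.sqrt_le_sqrt hfin
    rwa [Real.sqrt_sq dist_nonneg, Real.sqrt_sq hεnn] at this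
end

section
/- Let n ∈ ℕ and let a, b be indices with 0 ≤ a < b ≤ 4^n. If the level of the pair (a, b) in K_n equals i, then Metric.hausdorffDist (⋃_{a ≤ k < b} segment ℝ (K_n k) (K_n (k+1))) (segment ℝ (K_n a) (K_n b)) ≤ Real.sqrt 3 · 3^{1−i}. -/
/-- The point of the Euclidean plane with the given coordinates. -/
noncomputable def pt (x y : ℝ) : EuclideanSpace ℝ (Fin 2) :=
  (WithLp.equiv 2 (Fin 2 → ℝ)).symm ![x, y]

/-- Rotation by 90 degrees counterclockwise: `ρ(x, y) = (−y, x)`. -/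
noncomputable def rot90 (x : EuclideanSpace ℝ (Fin 2)) : EuclideanSpace ℝ (Fin 2) :=
  pt (-x 1) (x 0)

/-- The vertices of the Koch polyline: `koch n k` is the `k`-th vertex (for `0 ≤ k ≤ 4^n`)
of the `n`-th stage `K_n` of the Koch curve construction, starting from the unit segment
from `(0,0)` to `(1,0)`.  Each edge `ab` of `K_n` is replaced in `K_{n+1}` by the four edges
through `a`, `a + (b−a)/3`, `(a+b)/2 + (√3/6)·ρ(b−a)`, `a + 2(b−a)/3`, `b`. -/
noncomputable def koch : ℕ → ℕ → EuclideanSpace ℝ (Fin 2)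
  | 0, k => if k = 0 then pt 0 0 else pt 1 0
  | n + 1, j =>
      let a := koch n (j / 4)
      let b := koch n (j / 4 + 1)
      if j % 4 = 0 then a
      else if j % 4 = 1 then a + (3 : ℝ)⁻¹ • (b - a)
      else if j % 4 = 2 then (2 : ℝ)⁻¹ • (a + b) + (Real.sqrt 3 / 6) • rot90 (b - a)
      else a + (2 / 3 : ℝ) • (b - a)

/-- The level of the index `k` (with `0 ≤ k ≤ 4^n`) in `K_n`: the least `i ≤ n` such that
`4^(n−i)` divides `k`, i.e. such that `koch n k` is already a vertex of `K_i`. -/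
noncomputable def kochLevel (n k : ℕ) : ℕ := sInf {i | i ≤ n ∧ 4 ^ (n - i) ∣ k}

/-- The level of the pair of indices `(a, b)`: the least `i` such that at least two indices
`k` with `a ≤ k ≤ b` have level at most `i`. -/
noncomputable def kochPairLevel (n a b : ℕ) : ℕ :=
  sInf {i | ∃ k₁ k₂ : ℕ, a ≤ k₁ ∧ k₁ < k₂ ∧ k₂ ≤ b ∧ kochLevel n k₁ ≤ i ∧ kochLevel n k₂ ≤ i}

noncomputable abbrev E := EuclideanSpace ℝ (Fin 2)

lemma rot90_apply0 (x : E) : rot90 x 0 = -x 1 := rfl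
lemma rot90_apply1 (x : E) : rot90 x 1 = x 0 := rfl

lemma rot90_add (x y : E) : rot90 (x + y) = rot90 x + rot90 y := by
  ext i; fin_cases i <;> simp [rot90, pt] <;> ring

lemma rot90_smul (r : ℝ) (x : E) : rot90 (r • x) = r • rot90 x := by
  ext i; fin_cases i <;> simp [rot90, pt] <;> ring

lemma rot90_sub (x y : E) : rot90 (x - y) = rot90 x - rot90 y := by
  ext i; fin_cases i <;> simp [rot90, pt] <;> ring

lemma rot90_neg (x : E) : rot90 (-x) = -rot90 x := by
  ext i; fin_cases i <;> simp [rot90, pt]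

lemma rot90_rot90 (x : E) : rot90 (rot90 x) = -x := by
  ext i; fin_cases i <;> simp [rot90, pt]

lemma norm_combo (u : E) (p q : ℝ) :
    ‖p • u + q • rot90 u‖ ^ 2 = (p ^ 2 + q ^ 2) * ‖u‖ ^ 2 := by
  rw [EuclideanSpace.norm_eq, EuclideanSpace.norm_eq]
  rw [Real.sq_sqrt (by positivity), Real.sq_sqrt (by positivity)]
  simp [Fin.sum_univ_two, rot90, pt]
  ring

noncomputable def kedge (n k : ℕ) : E := koch n (k + 1) - koch n k

lemma koch_r0 (n k : ℕ) : koch (n + 1) (4 * k) = koch n k := by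
  simp [koch, Nat.mul_div_cancel_left, Nat.mul_mod_right]

lemma koch_r1 (n k : ℕ) :
    koch (n + 1) (4 * k + 1) = koch n k + (3 : ℝ)⁻¹ • (koch n (k + 1) - koch n k) := by
  have h1 : (4 * k + 1) / 4 = k := by omega
  have h2 : (4 * k + 1) % 4 = 1 := by omega
  simp [koch, h1, h2]

lemma koch_r2 (n k : ℕ) :
    koch (n + 1) (4 * k + 2) = (2 : ℝ)⁻¹ • (koch n k + koch n (k + 1))
      + (Real.sqrt 3 / 6) • rot90 (koch n (k + 1) - koch n k) := by
  have h1 : (4 * k + 2) / 4 = k := by omega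
  have h2 : (4 * k + 2) % 4 = 2 := by omega
  simp [koch, h1, h2]

lemma koch_r3 (n k : ℕ) :
    koch (n + 1) (4 * k + 3) = koch n k + (2 / 3 : ℝ) • (koch n (k + 1) - koch n k) := by
  have h1 : (4 * k + 3) / 4 = k := by omega
  have h2 : (4 * k + 3) % 4 = 3 := by omega
  simp [koch, h1, h2]

lemma koch_r4 (n k : ℕ) : koch (n + 1) (4 * k + 4) = koch n (k + 1) := by
  have : 4 * k + 4 = 4 * (k + 1) := by ring
  rw [this, koch_r0]

lemma kedge_e0 (n k : ℕ) : kedge (n + 1) (4 * k) = (3 : ℝ)⁻¹ • kedge n k := by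
  unfold kedge
  rw [show 4 * k + 1 = 4 * k + 1 from rfl, koch_r1, koch_r0]
  module

lemma kedge_e1 (n k : ℕ) : kedge (n + 1) (4 * k + 1)
    = (6 : ℝ)⁻¹ • kedge n k + (Real.sqrt 3 / 6) • rot90 (kedge n k) := by
  unfold kedge
  rw [show 4 * k + 1 + 1 = 4 * k + 2 from rfl, koch_r2, koch_r1]
  module

lemma kedge_e2 (n k : ℕ) : kedge (n + 1) (4 * k + 2)
    = (6 : ℝ)⁻¹ • kedge n k - (Real.sqrt 3 / 6) • rot90 (kedge n k) := by
  unfold kedge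
  rw [show 4 * k + 2 + 1 = 4 * k + 3 from rfl, koch_r3, koch_r2]
  module

lemma kedge_e3 (n k : ℕ) : kedge (n + 1) (4 * k + 3) = (3 : ℝ)⁻¹ • kedge n k := by
  unfold kedge
  rw [show 4 * k + 3 + 1 = 4 * k + 4 from rfl, koch_r4, koch_r3]
  module

lemma sqrt3_sq : Real.sqrt 3 ^ 2 = 3 := Real.sq_sqrt (by norm_num)

lemma norm_eq_of_sq {v : E} {r : ℝ} (h : ‖v‖ ^ 2 = r ^ 2) (hr : 0 ≤ r) : ‖v‖ = r := by
  have := norm_nonneg v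
  nlinarith

lemma norm_kedge : ∀ m k, k < 4 ^ m → ‖kedge m k‖ = (3 : ℝ)⁻¹ ^ m := by
  intro m
  induction m with
  | zero =>
    intro k hk
    interval_cases k
    have : kedge 0 0 = pt 1 0 - pt 0 0 := by simp [kedge, koch]
    rw [this, EuclideanSpace.norm_eq]
    simp [Fin.sum_univ_two, pt]
  | succ m ih =>
    intro k hk
    obtain ⟨q, r, hr, rfl⟩ : ∃ q r, r < 4 ∧ k = 4 * q + r :=
      ⟨k / 4, k % 4, Nat.mod_lt _ (by norm_num), (Nat.div_add_mod k 4).symm⟩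
    have hq : q < 4 ^ m := by
      have : 4 ^ (m + 1) = 4 * 4 ^ m := by ring
      omega
    have hu := ih q hq
    have key : ∀ p s : ℝ, kedge (m + 1) (4 * q + r) = p • kedge m q + s • rot90 (kedge m q) →
        p ^ 2 + s ^ 2 = (3 : ℝ)⁻¹ ^ 2 → ‖kedge (m + 1) (4 * q + r)‖ = (3 : ℝ)⁻¹ ^ (m + 1) := by
      intro p s h hps
      apply norm_eq_of_sq _ (by positivity)
      rw [h, norm_combo, hu, hps]
      ring
    interval_cases r
    · exact key _ 0 (by simpa using kedge_e0 m q) (by norm_num)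
    · exact key (6 : ℝ)⁻¹ (Real.sqrt 3 / 6) (kedge_e1 m q) (by
        rw [div_pow, sqrt3_sq]; norm_num)
    · exact key (6 : ℝ)⁻¹ (-(Real.sqrt 3 / 6)) (by rw [kedge_e2]; module) (by
        rw [neg_pow, div_pow, sqrt3_sq]; norm_num)
    · exact key _ 0 (by simpa using kedge_e3 m q) (by norm_num)

lemma kedge_turn : ∀ m k, k + 2 ≤ 4 ^ m → ∃ c s : ℝ, c ^ 2 + s ^ 2 = 1 ∧ c ^ 2 ≤ 1 / 4 ∧
    kedge m (k + 1) = c • kedge m k + s • rot90 (kedge m k) := by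
  have h3 : Real.sqrt 3 ^ 2 = 3 := sqrt3_sq
  intro m
  induction m with
  | zero => intro k hk; omega
  | succ m ih =>
    intro k hk
    obtain ⟨q, r, hr, rfl⟩ : ∃ q r, r < 4 ∧ k = 4 * q + r :=
      ⟨k / 4, k % 4, Nat.mod_lt _ (by norm_num), (Nat.div_add_mod k 4).symm⟩
    interval_cases r
    · refine ⟨1 / 2, Real.sqrt 3 / 2, by nlinarith, by norm_num, ?_⟩
      rw [show 4 * q + 0 + 1 = 4 * q + 1 from rfl, kedge_e1, show 4 * q + 0 = 4 * q from rfl,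
        kedge_e0, rot90_smul]
      match_scalars <;> nlinarith
    · refine ⟨-(1 / 2), -(Real.sqrt 3 / 2), by nlinarith, by norm_num, ?_⟩
      rw [show 4 * q + 1 + 1 = 4 * q + 2 from rfl, kedge_e2, kedge_e1, rot90_add, rot90_smul,
        rot90_smul, rot90_rot90]
      match_scalars <;> nlinarith
    · refine ⟨1 / 2, Real.sqrt 3 / 2, by nlinarith, by norm_num, ?_⟩
      rw [show 4 * q + 2 + 1 = 4 * q + 3 from rfl, kedge_e3, kedge_e2, rot90_sub, rot90_smul,
        rot90_smul, rot90_rot90]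
      match_scalars <;> nlinarith
    · have hq : q + 2 ≤ 4 ^ m := by
        have : 4 ^ (m + 1) = 4 * 4 ^ m := by ring
        omega
      obtain ⟨c, s, hcs, hc, h⟩ := ih q hq
      refine ⟨c, s, hcs, hc, ?_⟩
      rw [show 4 * q + 3 + 1 = 4 * (q + 1) from by ring, kedge_e0, kedge_e3, h, rot90_smul]
      module

noncomputable def apexP (n k : ℕ) : E :=
  (2 : ℝ)⁻¹ • (koch n k + koch n (k + 1)) + (Real.sqrt 3 / 6) • rot90 (kedge n k)

noncomputable def tri (n k : ℕ) : Set E :=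
  convexHull ℝ {koch n k, koch n (k + 1), apexP n k}

lemma combo_mem {A B M : E} {α β γ : ℝ} (hα : 0 ≤ α) (hβ : 0 ≤ β) (hγ : 0 ≤ γ)
    (h : α + β + γ = 1) : α • A + β • B + γ • M ∈ convexHull ℝ ({A, B, M} : Set E) := by
  have := Finset.centerMass_mem_convexHull (Finset.univ : Finset (Fin 3))
    (w := ![α, β, γ]) (z := ![A, B, M]) (s := ({A, B, M} : Set E)) (by
      intro i _; fin_cases i <;> simpa)
    (by rw [Fin.sum_univ_three]; simp only [Matrix.cons_val_zero, Matrix.cons_val_one,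
        Matrix.head_cons, Matrix.cons_val_two, Matrix.tail_cons]; linarith)
    (by intro i _; fin_cases i <;> simp)
  rw [Finset.centerMass, Fin.sum_univ_three, Fin.sum_univ_three] at this
  simp only [Matrix.cons_val_zero, Matrix.cons_val_one, Matrix.head_cons, Matrix.cons_val_two,
    Matrix.tail_cons] at this
  rw [h] at this
  simpa using this

lemma mem_tri_self (n k : ℕ) : koch n k ∈ tri n k :=
  subset_convexHull ℝ _ (by simp)

lemma mem_tri_succ (n k : ℕ) : koch n (k + 1) ∈ tri n k :=
  subset_convexHull ℝ _ (by simp)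

lemma tri_subset (n k : ℕ) : ∀ r < 4, tri (n + 1) (4 * k + r) ⊆ tri n k := by
  have convt : Convex ℝ (tri n k) := convex_convexHull ℝ _
  set A := koch n k
  set B := koch n (k + 1)
  have hBA : koch n (k + 1) - koch n k = B - A := rfl
  set w := rot90 (B - A) with hw
  have hM : apexP n k = (2 : ℝ)⁻¹ • (A + B) + (Real.sqrt 3 / 6) • w := rfl
  -- memberships of the five subdivision vertices
  have m0 : koch (n + 1) (4 * k) ∈ tri n k := by rw [koch_r0]; exact mem_tri_self n k
  have m4 : koch (n + 1) (4 * k + 4) ∈ tri n k := by rw [koch_r4]; exact mem_tri_succ n k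
  have m1 : koch (n + 1) (4 * k + 1) ∈ tri n k := by
    have : koch (n + 1) (4 * k + 1)
        = (2/3 : ℝ) • A + (1/3 : ℝ) • B + (0 : ℝ) • apexP n k := by
      rw [koch_r1, hM]; module
    rw [this]; exact combo_mem (by norm_num) (by norm_num) le_rfl (by norm_num)
  have m3 : koch (n + 1) (4 * k + 3) ∈ tri n k := by
    have : koch (n + 1) (4 * k + 3)
        = (1/3 : ℝ) • A + (2/3 : ℝ) • B + (0 : ℝ) • apexP n k := by
      rw [koch_r3, hM]; module
    rw [this]; exact combo_mem (by norm_num) (by norm_num) le_rfl (by norm_num)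
  have m2 : koch (n + 1) (4 * k + 2) ∈ tri n k := by
    have : koch (n + 1) (4 * k + 2)
        = (0 : ℝ) • A + (0 : ℝ) • B + (1 : ℝ) • apexP n k := by
      rw [koch_r2, hM]; unfold w; module
    rw [this]; exact combo_mem le_rfl le_rfl (by norm_num) (by norm_num)
  -- apexes of the four sub-edges
  have a0 : apexP (n + 1) (4 * k) ∈ tri n k := by
    have : apexP (n + 1) (4 * k)
        = (2/3 : ℝ) • A + (0 : ℝ) • B + (1/3 : ℝ) • apexP n k := by
      rw [apexP, hM, kedge_e0, rot90_smul, koch_r0,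
        show 4 * k + 1 = 4 * k + 1 from rfl, koch_r1]
      unfold w; unfold kedge; module
    rw [this]; exact combo_mem (by norm_num) le_rfl (by norm_num) (by norm_num)
  have a1 : apexP (n + 1) (4 * k + 1) ∈ tri n k := by
    have : apexP (n + 1) (4 * k + 1)
        = (1/3 : ℝ) • A + (0 : ℝ) • B + (2/3 : ℝ) • apexP n k := by
      rw [apexP, hM, kedge_e1, rot90_add, rot90_smul, rot90_smul, rot90_rot90,
        show 4 * k + 1 + 1 = 4 * k + 2 from rfl, koch_r2, koch_r1]
      unfold w; unfold kedge; match_scalars <;> nlinarith [sqrt3_sq]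
    rw [this]; exact combo_mem (by norm_num) le_rfl (by norm_num) (by norm_num)
  have a2 : apexP (n + 1) (4 * k + 2) ∈ tri n k := by
    have : apexP (n + 1) (4 * k + 2)
        = (0 : ℝ) • A + (1/3 : ℝ) • B + (2/3 : ℝ) • apexP n k := by
      rw [apexP, hM, kedge_e2, rot90_sub, rot90_smul, rot90_smul, rot90_rot90,
        show 4 * k + 2 + 1 = 4 * k + 3 from rfl, koch_r3, koch_r2]
      unfold w; unfold kedge; match_scalars <;> nlinarith [sqrt3_sq]
    rw [this]; exact combo_mem le_rfl (by norm_num) (by norm_num) (by norm_num)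
  have a3 : apexP (n + 1) (4 * k + 3) ∈ tri n k := by
    have : apexP (n + 1) (4 * k + 3)
        = (0 : ℝ) • A + (2/3 : ℝ) • B + (1/3 : ℝ) • apexP n k := by
      rw [apexP, hM, kedge_e3, rot90_smul,
        show 4 * k + 3 + 1 = 4 * k + 4 from rfl, koch_r4, koch_r3]
      unfold w; unfold kedge; module
    rw [this]; exact combo_mem le_rfl (by norm_num) (by norm_num) (by norm_num)
  intro r hr
  apply convexHull_min _ convt
  interval_cases r <;>
    · intro x hx
      rcases hx with rfl | rfl | rfl
      · first
          | exact m0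
          | exact m1
          | exact m2
          | exact m3
      · first
          | exact m1
          | exact m2
          | exact m3
          | exact m4
      · first
          | exact a0
          | exact a1
          | exact a2
          | exact a3

lemma mem_tri : ∀ m n k j, k * 4 ^ m ≤ j → j ≤ (k + 1) * 4 ^ m → koch (n + m) j ∈ tri n k := by
  intro m
  induction m with
  | zero =>
    intro n k j h1 h2
    simp only [pow_zero, mul_one] at h1 h2
    have : j = k ∨ j = k + 1 := by omega
    rcases this with h | h
    · rw [Nat.add_zero, h]; exact mem_tri_self n k
    · rw [Nat.add_zero, h]; exact mem_tri_succ n k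
  | succ m ih =>
    intro n k j h1 h2
    have hp : 0 < 4 ^ m := Nat.pow_pos (by norm_num)
    set p : ℕ := 4 ^ m with hpdef
    have hps : (4 : ℕ) ^ (m + 1) = 4 * p := by rw [pow_succ]; ring
    set q := j / p with hq
    have hqp : q * p ≤ j := Nat.div_mul_le_self j p
    have hjq : j < (q + 1) * p := by
      have h := Nat.div_add_mod j p
      have h2 := Nat.mod_lt j hp
      have : j = q * p + j % p := by rw [hq, mul_comm]; omega
      nlinarith
    have h4k : 4 * k ≤ q := by
      rw [hq, Nat.le_div_iff_mul_le hp]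
      calc 4 * k * p = k * 4 ^ (m + 1) := by rw [hps]; ring
        _ ≤ j := h1
    set k' := min q (4 * k + 3) with hk'
    have hk'1 : 4 * k ≤ k' := le_min h4k (by omega)
    have hk'2 : k' ≤ 4 * k + 3 := min_le_right _ _
    have h3 : k' * p ≤ j := by
      calc k' * p ≤ q * p := Nat.mul_le_mul_right p (min_le_left _ _)
        _ ≤ j := hqp
    have h4 : j ≤ (k' + 1) * p := by
      rcases le_or_gt q (4 * k + 3) with h | h
      · have : k' = q := min_eq_left h
        rw [this]; omega
      · have hk'eq : k' = 4 * k + 3 := min_eq_right (by omega)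
        rw [hk'eq]
        calc j ≤ (k + 1) * 4 ^ (m + 1) := h2
          _ = (4 * k + 3 + 1) * p := by rw [hps]; ring
    have heq : n + (m + 1) = (n + 1) + m := by omega
    rw [heq]
    have := ih (n + 1) k' j h3 h4
    have hsub := tri_subset n k (k' - 4 * k) (by omega)
    have : tri (n + 1) k' ⊆ tri n k := by
      have : 4 * k + (k' - 4 * k) = k' := by omega
      rwa [this] at hsub
    exact this (ih (n + 1) k' j h3 h4)

lemma dist_le_of_combo {V C u : E} {p q r : ℝ} (h : V - C = p • u + q • rot90 u)
    (hpq : p ^ 2 + q ^ 2 ≤ r ^ 2) (hr : 0 ≤ r) : dist V C ≤ r * ‖u‖ := by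
  rw [dist_eq_norm]
  have h2 : ‖V - C‖ ^ 2 = (p ^ 2 + q ^ 2) * ‖u‖ ^ 2 := by rw [h, norm_combo]
  have hn1 := norm_nonneg (V - C)
  have hn2 := norm_nonneg u
  have hsq : ‖V - C‖ ^ 2 ≤ (r * ‖u‖) ^ 2 := by nlinarith [sq_nonneg ‖u‖]
  nlinarith [hsq, mul_nonneg hr hn2]

lemma tri_subset_ball_single {l c : ℕ} (hc : c < 4 ^ l) :
    tri l c ⊆ Metric.closedBall ((2 : ℝ)⁻¹ • (koch l c + koch l (c + 1)))
      ((1 / 2) * (3 : ℝ)⁻¹ ^ l) := by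
  set C := (2 : ℝ)⁻¹ • (koch l c + koch l (c + 1))
  have hL := norm_kedge l c hc
  apply convexHull_min _ (convex_closedBall _ _)
  intro x hx
  simp only [Metric.mem_closedBall]
  have key : ∀ p q : ℝ, x - C = p • kedge l c + q • rot90 (kedge l c) →
      p ^ 2 + q ^ 2 ≤ (1 / 2) ^ 2 → dist x C ≤ 1 / 2 * (3 : ℝ)⁻¹ ^ l := by
    intro p q h hpq
    have := dist_le_of_combo h hpq (by norm_num)
    rwa [hL] at this
  rcases hx with rfl | rfl | rfl
  · exact key (-(1/2)) 0 (by unfold C; unfold kedge; module) (by norm_num)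
  · exact key (1/2) 0 (by unfold C; unfold kedge; module) (by norm_num)
  · exact key 0 (Real.sqrt 3 / 6) (by unfold C; unfold apexP; module)
      (by nlinarith [sqrt3_sq])

lemma tri_pair_subset_ball {l c : ℕ} (h2 : c + 2 ≤ 4 ^ l) :
    tri l c ∪ tri l (c + 1) ⊆ Metric.closedBall ((2 : ℝ)⁻¹ • (koch l c + koch l (c + 2)))
      ((Real.sqrt 3 / 2) * (3 : ℝ)⁻¹ ^ l) := by
  obtain ⟨cc, ss, hcs, hcc, hturn⟩ := kedge_turn l c h2
  set C := (2 : ℝ)⁻¹ • (koch l c + koch l (c + 2))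
  have hL := norm_kedge l c (by omega)
  have hss : ss ^ 2 ≤ 1 := by nlinarith
  have key : ∀ x : E, ∀ p q : ℝ, x - C = p • kedge l c + q • rot90 (kedge l c) →
      p ^ 2 + q ^ 2 ≤ (Real.sqrt 3 / 2) ^ 2 →
      x ∈ Metric.closedBall C ((Real.sqrt 3 / 2) * (3 : ℝ)⁻¹ ^ l) := by
    intro x p q h hpq
    simp only [Metric.mem_closedBall]
    have := dist_le_of_combo h hpq (by positivity)
    rwa [hL] at this
  have hv : koch l (c + 2) - koch l (c + 1)
      = cc • kedge l c + ss • rot90 (kedge l c) := by rw [← hturn]; rfl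
  have hB : koch l (c + 1) = koch l c + kedge l c := by unfold kedge; module
  have hP2 : koch l (c + 2) = koch l c + (1 + cc) • kedge l c + ss • rot90 (kedge l c) := by
    have : koch l (c + 2) = koch l (c + 1) + (koch l (c + 2) - koch l (c + 1)) := by module
    rw [this, hv, hB]; module
  have h34 : (Real.sqrt 3 / 2) ^ 2 = 3 / 4 := by rw [div_pow, sqrt3_sq]; norm_num
  apply Set.union_subset
  · apply convexHull_min _ (convex_closedBall _ _)
    intro x hx
    rcases hx with rfl | rfl | rfl
    · exact key _ (-((1 + cc)/2)) (-(ss/2)) (by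
        unfold C; rw [hP2]; module) (by rw [h34]; nlinarith)
    · exact key _ ((1 - cc)/2) (-(ss/2)) (by
        unfold C; rw [hP2, hB]; module) (by rw [h34]; nlinarith)
    · exact key _ (-(cc/2)) (Real.sqrt 3 / 6 - ss/2) (by
        unfold C; unfold apexP; rw [hP2, hB]; module) (by
        rw [h34]; nlinarith [sqrt3_sq, hss, hcs, sq_nonneg (Real.sqrt 3 * ss + 2)])
  · apply convexHull_min _ (convex_closedBall _ _)
    intro x hx
    rcases hx with rfl | rfl | rfl
    · exact key _ ((1 - cc)/2) (-(ss/2)) (by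
        unfold C; rw [hP2, hB]; module) (by rw [h34]; nlinarith)
    · exact key _ ((1 + cc)/2) (ss/2) (by
        unfold C; rw [hP2]; module) (by rw [h34]; nlinarith)
    · exact key _ (1/2 - Real.sqrt 3 * ss/6) (Real.sqrt 3 * cc/6) (by
        unfold C; unfold apexP
        rw [hturn, rot90_add, rot90_smul, rot90_smul, rot90_rot90, hP2, hB]
        module) (by
        rw [h34]; nlinarith [sqrt3_sq, hss, hcs, sq_nonneg (Real.sqrt 3 * ss + 2)])

lemma kochLevel_le (n k : ℕ) : kochLevel n k ≤ n :=
  Nat.sInf_le ⟨le_rfl, by simp⟩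

lemma haus_le_of_subset_ball {s t : Set E} {C : E} {r : ℝ} (hr : 0 ≤ r) (hs : s.Nonempty)
    (ht : t.Nonempty) (hsb : s ⊆ Metric.closedBall C r) (htb : t ⊆ Metric.closedBall C r) :
    Metric.hausdorffDist s t ≤ 2 * r := by
  have bb : Bornology.IsBounded (Metric.closedBall C r) := Metric.isBounded_closedBall
  refine (Metric.hausdorffDist_le_diam hs (bb.subset hsb) ht (bb.subset htb)).trans ?_
  calc Metric.diam (s ∪ t) ≤ Metric.diam (Metric.closedBall C r) :=
        Metric.diam_mono (Set.union_subset hsb htb) bb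
    _ ≤ 2 * r := Metric.diam_closedBall hr

lemma one_le_sqrt3 : (1 : ℝ) ≤ Real.sqrt 3 := by
  rw [show (1:ℝ) = Real.sqrt 1 from Real.sqrt_one.symm]
  exact Real.sqrt_le_sqrt (by norm_num)

/-- If the pair of indices `(a, b)` has level `i` in `K_n`, then the Hausdorff distance
between the subpolyline of `K_n` between `a` and `b` and the segment joining its endpoints
is at most `√3 · 3^(1−i)`. -/
theorem koch_hausdorff_upper_bound (n a b i : ℕ) (hab : a < b) (hb : b ≤ 4 ^ n)
    (hi : kochPairLevel n a b = i) :
    Metric.hausdorffDist (⋃ k ∈ Finset.Ico a b, segment ℝ (koch n k) (koch n (k + 1)))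
      (segment ℝ (koch n a) (koch n b)) ≤ Real.sqrt 3 * (3 : ℝ) ^ ((1 : ℤ) - (i : ℤ)) := by
  set S := ⋃ k ∈ Finset.Ico a b, segment ℝ (koch n k) (koch n (k + 1)) with hS
  set T := segment ℝ (koch n a) (koch n b) with hT
  have hSne : S.Nonempty :=
    ⟨koch n a, Set.mem_iUnion₂.mpr ⟨a, Finset.mem_Ico.mpr ⟨le_rfl, hab⟩,
      left_mem_segment ℝ _ _⟩⟩
  have hTne : T.Nonempty := ⟨koch n a, left_mem_segment ℝ _ _⟩
  have hin : i ≤ n := by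
    rw [← hi]
    exact Nat.sInf_le ⟨a, b, le_rfl, hab, le_rfl, kochLevel_le n a, kochLevel_le n b⟩
  -- a generic assembly step
  have assemble : ∀ (l c : ℕ) (C : E) (r : ℝ), 0 ≤ r →
      S ⊆ Metric.closedBall C r → T ⊆ Metric.closedBall C r →
      2 * r ≤ Real.sqrt 3 * (3 : ℝ) ^ ((1 : ℤ) - (i : ℤ)) →
      Metric.hausdorffDist S T ≤ Real.sqrt 3 * (3 : ℝ) ^ ((1 : ℤ) - (i : ℤ)) := by
    intro l c C r hr hSb hTb hle
    exact (haus_le_of_subset_ball hr hSne hTne hSb hTb).trans hle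
  rcases Nat.eq_zero_or_pos i with rfl | hipos
  · -- level 0 : use the whole curve inside `tri 0 0`
    have hmem : ∀ j ≤ 4 ^ n, koch n j ∈ tri 0 0 := by
      intro j hj
      have := mem_tri n 0 0 j (by simpa using Nat.zero_le j) (by simpa using hj)
      simpa using this
    have hball := tri_subset_ball_single (l := 0) (c := 0) (by norm_num)
    have hconv : Convex ℝ (Metric.closedBall ((2 : ℝ)⁻¹ • (koch 0 0 + koch 0 1))
        ((1/2) * (3 : ℝ)⁻¹ ^ 0)) := convex_closedBall _ _
    have hSb : S ⊆ Metric.closedBall ((2 : ℝ)⁻¹ • (koch 0 0 + koch 0 1))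
        ((1/2) * (3 : ℝ)⁻¹ ^ 0) := by
      refine Set.iUnion₂_subset fun k hk => ?_
      rw [Finset.mem_Ico] at hk
      exact (hconv.segment_subset (hball (hmem k (by omega))) (hball (hmem (k+1) (by omega))))
    have hTb : T ⊆ Metric.closedBall ((2 : ℝ)⁻¹ • (koch 0 0 + koch 0 1))
        ((1/2) * (3 : ℝ)⁻¹ ^ 0) :=
      hconv.segment_subset (hball (hmem a (by omega))) (hball (hmem b hb))
    refine assemble 0 0 _ _ (by norm_num) hSb hTb ?_
    have : ((1:ℤ) - ((0:ℕ) : ℤ)) = 1 := by norm_num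
    rw [this, zpow_one]
    nlinarith [one_le_sqrt3]
  · -- level i ≥ 1
    set l := i - 1 with hl
    have hil : i = l + 1 := by omega
    set m := n - l with hm
    have hnm : n = l + m := by omega
    set D := 4 ^ m with hD
    have hDpos : 0 < D := Nat.pow_pos (by norm_num)
    have h4n : (4:ℕ) ^ n = 4 ^ l * D := by rw [hnm, pow_add]
    set c := a / D with hc
    have hca : c * D ≤ a := Nat.div_mul_le_self a D
    have hacD : a < (c + 1) * D := by
      have h := Nat.div_add_mod a D
      have h2 := Nat.mod_lt a hDpos
      have : a = c * D + a % D := by rw [hc, mul_comm]; omega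
      nlinarith
    -- at most one multiple of D in [a, b]
    have hnotl : l ∉ {j | ∃ k₁ k₂ : ℕ, a ≤ k₁ ∧ k₁ < k₂ ∧ k₂ ≤ b ∧
        kochLevel n k₁ ≤ j ∧ kochLevel n k₂ ≤ j} := by
      apply Nat.notMem_of_lt_sInf
      rw [show sInf _ = kochPairLevel n a b from rfl, hi]
      omega
    have hlevel : ∀ k, D ∣ k → kochLevel n k ≤ l := by
      intro k hk
      exact Nat.sInf_le ⟨by omega, by rw [show n - l = m from rfl]; exact hk⟩
    have hbD : b ≤ (c + 2) * D := by
      by_contra h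
      exact hnotl ⟨(c + 1) * D, (c + 2) * D, by omega,
        by have := hDpos; nlinarith, by omega,
        hlevel _ ⟨c + 1, by ring⟩, hlevel _ ⟨c + 2, by ring⟩⟩
    have hzpow : (3 : ℝ)⁻¹ ^ l = (3 : ℝ) ^ ((1 : ℤ) - (i : ℤ)) := by
      rw [inv_pow, ← zpow_natCast (3:ℝ) l, ← zpow_neg]
      congr 1
      omega
    rcases le_or_gt b ((c + 1) * D) with hcase | hcase
    · -- single edge
      have hcl : c < 4 ^ l := by
        by_contra h
        push_neg at h
        have : 4 ^ l * D ≤ c * D := Nat.mul_le_mul_right D h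
        omega
      have hmem : ∀ j, c * D ≤ j → j ≤ (c + 1) * D → koch n j ∈ tri l c := by
        intro j h1 h2
        have := mem_tri m l c j h1 h2
        rwa [← hnm] at this
      have hball := tri_subset_ball_single (l := l) (c := c) hcl
      have hconv : Convex ℝ (Metric.closedBall ((2 : ℝ)⁻¹ • (koch l c + koch l (c + 1)))
          ((1/2) * (3 : ℝ)⁻¹ ^ l)) := convex_closedBall _ _
      have hSb : S ⊆ Metric.closedBall ((2 : ℝ)⁻¹ • (koch l c + koch l (c + 1)))
          ((1/2) * (3 : ℝ)⁻¹ ^ l) := by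
        refine Set.iUnion₂_subset fun k hk => ?_
        rw [Finset.mem_Ico] at hk
        exact hconv.segment_subset (hball (hmem k (by omega) (by omega)))
          (hball (hmem (k+1) (by omega) (by omega)))
      have hTb : T ⊆ Metric.closedBall ((2 : ℝ)⁻¹ • (koch l c + koch l (c + 1)))
          ((1/2) * (3 : ℝ)⁻¹ ^ l) :=
        hconv.segment_subset (hball (hmem a hca (by omega))) (hball (hmem b (by omega) hcase))
      refine assemble l c _ _ (by positivity) hSb hTb ?_
      rw [← hzpow]
      nlinarith [one_le_sqrt3, pow_pos (show (0:ℝ) < 3⁻¹ by norm_num) l]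
    · -- two edges
      have hcl : c + 2 ≤ 4 ^ l := by
        by_contra h
        push_neg at h
        have h1 : 4 ^ l ≤ c + 1 := by omega
        have : 4 ^ l * D ≤ (c + 1) * D := Nat.mul_le_mul_right D h1
        omega
      have hmem1 : ∀ j, c * D ≤ j → j ≤ (c + 1) * D → koch n j ∈ tri l c := by
        intro j h1 h2
        have := mem_tri m l c j h1 h2
        rwa [← hnm] at this
      have hmem2 : ∀ j, (c + 1) * D ≤ j → j ≤ (c + 2) * D → koch n j ∈ tri l (c + 1) := by
        intro j h1 h2
        have := mem_tri m l (c + 1) j h1 h2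
        rwa [← hnm] at this
      have hball := tri_pair_subset_ball (l := l) (c := c) hcl
      have hball1 : tri l c ⊆ Metric.closedBall ((2 : ℝ)⁻¹ • (koch l c + koch l (c + 2)))
          ((Real.sqrt 3 / 2) * (3 : ℝ)⁻¹ ^ l) := (Set.subset_union_left).trans hball
      have hball2 : tri l (c + 1) ⊆ Metric.closedBall ((2 : ℝ)⁻¹ • (koch l c + koch l (c + 2)))
          ((Real.sqrt 3 / 2) * (3 : ℝ)⁻¹ ^ l) := (Set.subset_union_right).trans hball
      have hconv : Convex ℝ (Metric.closedBall ((2 : ℝ)⁻¹ • (koch l c + koch l (c + 2)))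
          ((Real.sqrt 3 / 2) * (3 : ℝ)⁻¹ ^ l)) := convex_closedBall _ _
      have hSb : S ⊆ Metric.closedBall ((2 : ℝ)⁻¹ • (koch l c + koch l (c + 2)))
          ((Real.sqrt 3 / 2) * (3 : ℝ)⁻¹ ^ l) := by
        refine Set.iUnion₂_subset fun k hk => ?_
        rw [Finset.mem_Ico] at hk
        rcases le_or_gt (k + 1) ((c + 1) * D) with h | h
        · exact hconv.segment_subset (hball1 (hmem1 k (by omega) (by omega)))
            (hball1 (hmem1 (k+1) (by omega) h))
        · exact hconv.segment_subset (hball2 (hmem2 k (by omega) (by omega)))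
            (hball2 (hmem2 (k+1) (by omega) (by omega)))
      have hTb : T ⊆ Metric.closedBall ((2 : ℝ)⁻¹ • (koch l c + koch l (c + 2)))
          ((Real.sqrt 3 / 2) * (3 : ℝ)⁻¹ ^ l) :=
        hconv.segment_subset (hball1 (hmem1 a hca (by omega)))
          (hball2 (hmem2 b (by omega) hbD))
      refine assemble l c _ _ (by positivity) hSb hTb ?_
      rw [← hzpow]
      have := pow_pos (show (0:ℝ) < 3⁻¹ by norm_num) l
      nlinarith [Real.sqrt_nonneg 3]
end
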